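/- arXiv:1402.6526 — 12 statements merged into one kernel-verified Lean document; each statement's English description precedes it below -/
import Mathlib

section
/- Let B1 and B2 be two linearly independent skew-symmetric bilinear forms on a finite-dimensional real vector space V, and for t = (t1,t2) ∈ ℝ² put B^t = t1·B1 + t2·B2. Suppose the kernel of each form B^t is nontrivial, set r = min_{t ∈ ℝ²∖{0}} dim ker B^t (so r > 0) and T = {t ∈ ℝ²∖{0} : dim ker B^t = r}. Then the subspace L = Σ_{t ∈ T} ker B^t of V is isotropic with respect to every form B^t, t ∈ ℝ², i.e. B^t(L,L) = 0 for all t ∈ ℝ². -/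
/-!
Let `s` have kernel of minimal dimension among the nonzero parameters. If some form `B^u` of the
pencil paired two vectors `x, y ∈ ker B^s` nontrivially, then `B^s + ε B^u` would be nondegenerate
on `W ⊕ span {x, y}` for a complement `W` of `ker B^s` and all small `ε ≠ 0`, so its kernel would
be at least two dimensions smaller: impossible. Hence each `ker B^s`, `s ∈ T`, is isotropic for the
whole pencil. For non-proportional `s, s' ∈ T` the forms `B^s, B^{s'}` span the pencil, and `B^s`
kills `ker B^s` on the left while `B^{s'}` kills `ker B^{s'}` on the right, so `ker B^s` and
`ker B^{s'}` are orthogonal for every `B^t`. Bilinearity extends this to their sum `L`.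
-/

open Module LinearMap

theorem LinearMap.apply_eq_zero_of_mem_biSup {R M N ι : Type*} [CommSemiring R] [AddCommMonoid M]
    [Module R M] [AddCommMonoid N] [Module R N] (β : M →ₗ[R] M →ₗ[R] N) (p : ι → Submodule R M)
    (S : Set ι) (h : ∀ i ∈ S, ∀ j ∈ S, ∀ x ∈ p i, ∀ y ∈ p j, β x y = 0) :
    ∀ x ∈ ⨆ i ∈ S, p i, ∀ y ∈ ⨆ i ∈ S, p i, β x y = 0 := by
  intro x hx y hy
  have hxS : ∀ i ∈ S, ∀ x ∈ p i, ⨆ j ∈ S, p j ≤ ker (β x) := fun i hi x hx =>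
    iSup₂_le fun j hj y hy => h i hi j hj x hx y hy
  have : ⨆ i ∈ S, p i ≤ ker (β.flip y) :=
    iSup₂_le fun i hi x hx => hxS i hi x hx hy
  exact this hx

section Gram

open Matrix

variable {K V : Type*} [Field K] [AddCommGroup V] [Module K V]

theorem finrank_ker_add_card_le_of_det_ne_zero [FiniteDimensional K V] {ι : Type*} [Fintype ι]
    [DecidableEq ι] (β : V →ₗ[K] V →ₗ[K] K) (f : ι → V)
    (hdet : (Matrix.of fun i j => β (f i) (f j)).det ≠ 0) :
    finrank K (ker β) + Fintype.card ι ≤ finrank K V := by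
  let Φ : V →ₗ[K] ι → K := LinearMap.pi fun j => β.flip (f j)
  have hΦ : ∀ c, Φ (Fintype.linearCombination K f c) = c ᵥ* of fun i j => β (f i) (f j) := by
    intro c
    ext j
    simp [Φ, Fintype.linearCombination_apply, vecMul, dotProduct]
  have hsurj : Function.Surjective Φ := by
    intro u
    obtain ⟨c, hc⟩ :=
      vecMul_surjective_iff_isUnit.mpr ((Matrix.isUnit_iff_isUnit_det _).mpr hdet.isUnit) u
    exact ⟨_, (hΦ c).trans hc⟩
  have hker : ker β ≤ ker Φ := fun z hz => by
    ext j
    simp [Φ, mem_ker.mp hz]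
  have := finrank_range_add_finrank_ker Φ
  rw [range_eq_top.mpr hsurj, finrank_top, finrank_fintype_fun_eq_card] at this
  have := Submodule.finrank_mono hker
  omega

theorem det_gram_ne_zero_of_isCompl_ker {ι : Type*} [Fintype ι] [DecidableEq ι]
    (C : V →ₗ[K] V →ₗ[K] K) (hC : ∀ v w, C v w = -C w v) {W : Submodule K V}
    (hW : IsCompl (ker C) W) (b : Basis ι K W) :
    (Matrix.of fun i j => C (b i) (b j)).det ≠ 0 := by
  intro hdet
  obtain ⟨c, hc0, hc⟩ := exists_vecMul_eq_zero_iff.mpr hdet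
  set w : W := Fintype.linearCombination K b c
  have hw_ker : (w : V) ∈ ker C := by
    have hW_le : W ≤ ker (C w) := by
      have hbasis : (C w).domRestrict W = 0 := b.ext fun j => by
        simpa [w, Fintype.linearCombination_apply, vecMul, dotProduct] using congrFun hc j
      exact fun u hu => LinearMap.congr_fun hbasis ⟨u, hu⟩
    have hker_le : ker C ≤ ker (C w) := fun p hp => by
      rw [mem_ker, hC, mem_ker.mp hp, LinearMap.zero_apply, neg_zero]
    rw [mem_ker, ← ker_eq_top, eq_top_iff, ← hW.sup_eq_top]
    exact sup_le hker_le hW_le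
  have hw : w = 0 := by simpa using hW.disjoint.le_bot ⟨hw_ker, w.2⟩
  exact hc0 (funext (Fintype.linearIndependent_iff.mp b.linearIndependent c hw))

end Gram

theorem Continuous.exists_ne_zero_apply_ne_zero {g : ℝ → ℝ} (hg : Continuous g) (h0 : g 0 ≠ 0) :
    ∃ ε ≠ 0, g ε ≠ 0 :=
  (((hg.continuousAt.eventually_ne h0).filter_mono nhdsWithin_le_nhds).and
    (self_mem_nhdsWithin (s := {0}ᶜ))).exists.imp fun _ h => ⟨h.2, h.1⟩

section Perturbation

open Matrix

variable {V : Type*} [AddCommGroup V] [Module ℝ V] [FiniteDimensional ℝ V]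

theorem exists_finrank_ker_add_two_le (C D : V →ₗ[ℝ] V →ₗ[ℝ] ℝ)
    (hC : ∀ v w, C v w = -C w v) (hD : ∀ v w, D v w = -D w v)
    {x y : V} (hx : C x = 0) (hy : C y = 0) (hxy : D x y ≠ 0) :
    ∃ ε : ℝ, ε ≠ 0 ∧ finrank ℝ (ker (C + ε • D)) + 2 ≤ finrank ℝ (ker C) := by
  obtain ⟨W, hW⟩ := Submodule.exists_isCompl (ker C)
  let b := finBasis ℝ W
  let f : Fin (finrank ℝ W) ⊕ Fin 2 → V := Sum.elim (fun i => b i) ![x, y]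
  -- the Gram matrix of `C + ε • D` on `f` with the rows of `x, y` divided by `ε`
  let H : ℝ → Matrix (Fin (finrank ℝ W) ⊕ Fin 2) (Fin (finrank ℝ W) ⊕ Fin 2) ℝ := fun ε =>
    of fun i j => (Sum.elim (fun _ => C + ε • D) (fun _ => D) i : V →ₗ[ℝ] V →ₗ[ℝ] ℝ) (f i) (f j)
  have hgram : ∀ ε, (Matrix.of fun i j => (C + ε • D) (f i) (f j)) =
      diagonal (Sum.elim 1 fun _ => ε) * H ε := by
    intro ε
    ext (i | i) j
    · simp [H]
    · fin_cases i <;> simp [H, f, hx, hy]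
  have hH0 : (H 0).det ≠ 0 := by
    have hblock : H 0 = fromBlocks (of fun i j => C (b i) (b j)) 0
        (of fun i j => D (![x, y] i) (b j)) (of fun i j => D (![x, y] i) (![x, y] j)) := by
      ext (i | i) (j | j)
      · simp [H, f]
      · fin_cases j <;> simp [H, f, hC _ x, hC _ y, hx, hy]
      · simp [H, f]
      · simp [H, f]
    rw [hblock, det_fromBlocks_zero₁₂, det_fin_two]
    have hxx : D x x = 0 := by linarith [hD x x]
    have hyy : D y y = 0 := by linarith [hD y y]
    simp only [of_apply, cons_val_zero, cons_val_one, hxx, hyy, hD y x]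
    exact mul_ne_zero (det_gram_ne_zero_of_isCompl_ker C hC hW b) (by simpa using hxy)
  have hcont : Continuous fun ε => (H ε).det := by
    refine Continuous.matrix_det (continuous_matrix fun i j => ?_)
    rcases i with i | i <;> simp [H] <;> fun_prop
  obtain ⟨ε, hε, hHε⟩ := hcont.exists_ne_zero_apply_ne_zero hH0
  refine ⟨ε, hε, ?_⟩
  have hdet : (Matrix.of fun i j => (C + ε • D) (f i) (f j)).det ≠ 0 := by
    rw [hgram, det_mul, det_diagonal, Fintype.prod_sum_type]
    simpa [hε] using hHε
  have := finrank_ker_add_card_le_of_det_ne_zero _ f hdet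
  have := Submodule.finrank_add_eq_of_isCompl hW
  simp only [Fintype.card_sum, Fintype.card_fin] at *
  omega

end Perturbation

section Pencil

variable {V : Type*} [AddCommGroup V] [Module ℝ V] [FiniteDimensional ℝ V]
variable {E : Type*} [AddCommGroup E] [Module ℝ E] (P : E →ₗ[ℝ] V →ₗ[ℝ] V →ₗ[ℝ] ℝ)
  (hP : ∀ t v w, P t v w = -P t w v)
include hP

theorem apply_eq_zero_of_mem_ker_of_minimal {s : E}
    (hs : ∀ t ≠ 0, finrank ℝ (ker (P s)) ≤ finrank ℝ (ker (P t)))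
    (u : E) {x y : V} (hx : x ∈ ker (P s)) (hy : y ∈ ker (P s)) : P u x y = 0 := by
  by_contra hxy
  obtain ⟨ε, -, hε⟩ := exists_finrank_ker_add_two_le (P s) (P u) (hP s) (hP u) hx hy hxy
  rw [← map_smul, ← map_add] at hε
  by_cases h0 : s + ε • u = 0
  · rw [h0, map_zero, ker_zero, finrank_top] at hε
    have := Submodule.finrank_le (ker (P s))
    omega
  · have := hs _ h0
    omega

theorem apply_eq_zero_of_mem_ker_of_mem_ker_of_minimal (hE : finrank ℝ E = 2) {s s' : E}
    (hs0 : s ≠ 0) (hs'0 : s' ≠ 0)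
    (hs : ∀ t ≠ 0, finrank ℝ (ker (P s)) ≤ finrank ℝ (ker (P t)))
    (t : E) {x y : V} (hx : x ∈ ker (P s)) (hy : y ∈ ker (P s')) : P t x y = 0 := by
  by_cases hli : LinearIndependent ℝ ![s', s]
  · have hspan : Submodule.span ℝ {s', s} = ⊤ := by
      have : FiniteDimensional ℝ E := Module.finite_of_finrank_eq_succ hE
      rw [← Matrix.range_cons_cons_empty s' s ![]]
      exact hli.span_eq_top_of_card_eq_finrank' (by simp [hE])
    obtain ⟨a, c, rfl⟩ := Submodule.mem_span_pair.mp (hspan ▸ Submodule.mem_top (x := t))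
    rw [mem_ker] at hx hy
    simp [hx, hP s' x y, hy]
  · obtain ⟨a, rfl⟩ : ∃ a : ℝ, a • s = s' := by
      simpa [linearIndependent_fin2, hs0] using hli
    have ha : a ≠ 0 := by rintro rfl; simp at hs'0
    rw [map_smul, ker_smul _ _ ha] at hy
    exact apply_eq_zero_of_mem_ker_of_minimal P hP hs t hx hy

end Pencil

theorem stmt0_general {V : Type*} [AddCommGroup V] [Module ℝ V] [FiniteDimensional ℝ V]
    (B1 B2 : V →ₗ[ℝ] V →ₗ[ℝ] ℝ)
    (hskew1 : ∀ v w, B1 v w = - B1 w v)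
    (hskew2 : ∀ v w, B2 v w = - B2 w v)
    (Bt : ℝ × ℝ → (V →ₗ[ℝ] V →ₗ[ℝ] ℝ))
    (hBt : ∀ t, Bt t = t.1 • B1 + t.2 • B2)
    (r : ℕ)
    (hrlb : ∀ t : ℝ × ℝ, t ≠ 0 → r ≤ finrank ℝ (LinearMap.ker (Bt t)))
    (T : Set (ℝ × ℝ))
    (hT : T = {t : ℝ × ℝ | t ≠ 0 ∧ finrank ℝ (LinearMap.ker (Bt t)) = r})
    (L : Submodule ℝ V)
    (hL : L = ⨆ t ∈ T, LinearMap.ker (Bt t)) :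
    ∀ t : ℝ × ℝ, ∀ v ∈ L, ∀ w ∈ L, Bt t v w = 0 := by
  obtain ⟨P, rfl⟩ : ∃ P : ℝ × ℝ →ₗ[ℝ] V →ₗ[ℝ] V →ₗ[ℝ] ℝ, ⇑P = Bt :=
    ⟨(toSpanSingleton ℝ _ B1).coprod (toSpanSingleton ℝ _ B2), funext fun t => by simp [hBt]⟩
  have hP : ∀ t v w, P t v w = -P t w v := fun t v w => by
    simp only [hBt, LinearMap.add_apply, LinearMap.smul_apply, smul_eq_mul, hskew1 v w, hskew2 v w]
    ring
  have hmin : ∀ s ∈ T, ∀ t ≠ 0, finrank ℝ (ker (P s)) ≤ finrank ℝ (ker (P t)) := by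
    intro s hs t ht
    rw [hT] at hs
    exact hs.2 ▸ hrlb t ht
  intro t
  rw [hL]
  refine LinearMap.apply_eq_zero_of_mem_biSup (P t) _ T fun s hs s' hs' x hx y hy => ?_
  have hT0 : ∀ s ∈ T, s ≠ 0 := fun s hs => (hT ▸ hs).1
  exact apply_eq_zero_of_mem_ker_of_mem_ker_of_minimal P hP (by simp) (hT0 s hs) (hT0 s' hs')
    (hmin s hs) t hx hy

theorem stmt0 {V : Type*} [AddCommGroup V] [Module ℝ V] [FiniteDimensional ℝ V]
    (B1 B2 : V →ₗ[ℝ] V →ₗ[ℝ] ℝ)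
    (hskew1 : ∀ v w, B1 v w = - B1 w v)
    (hskew2 : ∀ v w, B2 v w = - B2 w v)
    (hindep : LinearIndependent ℝ ![B1, B2])
    (Bt : ℝ × ℝ → (V →ₗ[ℝ] V →ₗ[ℝ] ℝ))
    (hBt : ∀ t, Bt t = t.1 • B1 + t.2 • B2)
    (hker : ∀ t : ℝ × ℝ, LinearMap.ker (Bt t) ≠ ⊥)
    (r : ℕ) (hr : 0 < r)
    (hrlb : ∀ t : ℝ × ℝ, t ≠ 0 → r ≤ finrank ℝ (LinearMap.ker (Bt t)))
    (hratt : ∃ t : ℝ × ℝ, t ≠ 0 ∧ finrank ℝ (LinearMap.ker (Bt t)) = r)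
    (T : Set (ℝ × ℝ))
    (hT : T = {t : ℝ × ℝ | t ≠ 0 ∧ finrank ℝ (LinearMap.ker (Bt t)) = r})
    (L : Submodule ℝ V)
    (hL : L = ⨆ t ∈ T, LinearMap.ker (Bt t)) :
    ∀ t : ℝ × ℝ, ∀ v ∈ L, ∀ w ∈ L, Bt t v w = 0 :=
  stmt0_general B1 B2 hskew1 hskew2 Bt hBt r hrlb T hT L hL
end

section
/- For every x ∈ m, the kernel of the skew-symmetric bilinear form B_x^0(y1,y2) = ⟨x,[y1,y2]⟩ on m(x) equals the projection (g^x)_m of the centralizer g^x onto m along k; that is, {y ∈ m(x) : ⟨x,[y,y']⟩ = 0 for all y' ∈ m(x)} = (g^x)_m, and in particular (g^x)_m ⊆ m(x). -/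
open Module
open LinearMap (BilinForm)

/-!
Write `W = [x, k]`. Ad-invariance turns `B_x^0(y, y')` into `⟨[x, y], y'⟩` and shows that
`m(x) = m ∩ W^⊥`. Since `W ⊆ m` and the form is definite, `m = W ⊕ (m ∩ W^⊥)`, so `y ∈ m(x)` lies
in the kernel exactly when `[x, y] ∈ W`, i.e. `[x, y] = [x, u]` with `u ∈ k`; then `y = (y - u)_m`
with `y - u ∈ g^x`. Conversely, for `z ∈ g^x` one has `[x, z_m] = -[x, z - z_m] ∈ W`.
-/

namespace LinearMap.BilinForm

variable {K V : Type*} [Field K] [AddCommGroup V] [Module K V] [FiniteDimensional K V]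

theorem mem_of_forall_mem_orthogonal {B : BilinForm K V} (hrefl : B.IsRefl)
    (hanis : ∀ v, B v v = 0 → v = 0) {W m : Submodule K V} (hWm : W ≤ m) {v : V} (hv : v ∈ m)
    (h : ∀ u ∈ m, u ∈ B.orthogonal W → B v u = 0) : v ∈ W := by
  have hcompl : IsCompl W (B.orthogonal W) :=
    (isCompl_orthogonal_iff_disjoint hrefl).2 <| Submodule.disjoint_def.2 fun w hw hw' =>
      hanis w (hw' w hw)
  have hv' : v ∈ W ⊔ B.orthogonal W := by simp [hcompl.sup_eq_top]
  obtain ⟨w₁, hw₁, w₂, hw₂, rfl⟩ := Submodule.mem_sup.1 hv'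
  have hw₂m : w₂ ∈ m := by simpa using m.sub_mem hv (hWm hw₁)
  have hw₂ : B w₂ w₂ = 0 := by
    simpa [hw₂ w₁ hw₁] using h w₂ hw₂m hw₂
  simpa [hanis w₂ hw₂] using hw₁

end LinearMap.BilinForm

namespace ReductiveDecomposition

open LinearMap.BilinForm LieAlgebra

variable {K L : Type*} [Field K] [LieRing L] [LieAlgebra K L] {B : L →ₗ[K] L →ₗ[K] K}
  {k : LieSubalgebra K L} {m : Submodule K L} {π : L →ₗ[K] L}

theorem apply_lie_eq_apply_lie (hinv : ∀ x y z : L, B ⁅z, x⁆ y + B x ⁅z, y⁆ = 0) (x y z : L) :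
    B ⁅x, y⁆ z = B x ⁅y, z⁆ := by
  have := hinv x z y
  rw [← lie_skew, map_neg, LinearMap.neg_apply] at this
  linear_combination -this

theorem lie_mem_iff_mem_orthogonal (hinv : ∀ x y z : L, B ⁅z, x⁆ y + B x ⁅z, y⁆ = 0)
    (hm : ∀ y : L, y ∈ m ↔ ∀ z ∈ k, B z y = 0) (x y : L) :
    ⁅x, y⁆ ∈ m ↔ y ∈ BilinForm.orthogonal B (k.toSubmodule.map (ad K L x)) := by
  simp only [hm, mem_orthogonal_iff, Submodule.mem_map, forall_exists_index, and_imp,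
    forall_apply_eq_imp_iff₂, ad_apply, LieSubalgebra.mem_toSubmodule]
  refine forall₂_congr fun z _ => ?_
  rw [eq_neg_of_add_eq_zero_right (hinv z y x), neg_eq_zero]

theorem map_ad_le (hkm : ∀ z ∈ k, ∀ y ∈ m, ⁅z, y⁆ ∈ m) {x : L} (hx : x ∈ m) :
    k.toSubmodule.map (ad K L x) ≤ m := by
  rintro _ ⟨u, hu, rfl⟩
  rw [ad_apply, ← lie_skew]
  exact m.neg_mem (hkm u hu x hx)

theorem proj_eq_of_mem_of_sub_mem (hanis : ∀ v, B v v = 0 → v = 0)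
    (hm : ∀ y : L, y ∈ m ↔ ∀ z ∈ k, B z y = 0) (hπm : ∀ x : L, π x ∈ m)
    (hπk : ∀ x : L, x - π x ∈ k) {z a : L} (ha : a ∈ m) (hza : z - a ∈ k) : π z = a := by
  have hk : π z - a ∈ k := by simpa using k.sub_mem hza (hπk z)
  exact sub_eq_zero.1 (hanis _ ((hm _).1 (m.sub_mem (hπm z) ha) _ hk))

theorem proj_mem_kernel (hinv : ∀ x y z : L, B ⁅z, x⁆ y + B x ⁅z, y⁆ = 0)
    (hm : ∀ y : L, y ∈ m ↔ ∀ z ∈ k, B z y = 0) (hkm : ∀ z ∈ k, ∀ y ∈ m, ⁅z, y⁆ ∈ m)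
    (hπm : ∀ x : L, π x ∈ m) (hπk : ∀ x : L, x - π x ∈ k) {x z : L} (hx : x ∈ m)
    (hz : ⁅x, z⁆ = 0) :
    π z ∈ m ∧ ⁅x, π z⁆ ∈ m ∧ ∀ y' : L, y' ∈ m → ⁅x, y'⁆ ∈ m → B x ⁅π z, y'⁆ = 0 := by
  have hW : ⁅x, z - π z⁆ ∈ k.toSubmodule.map (ad K L x) := ⟨_, hπk z, rfl⟩
  have hxπ : ⁅x, π z⁆ = -⁅x, z - π z⁆ := by simp [lie_sub, hz]
  refine ⟨hπm z, hxπ ▸ m.neg_mem (map_ad_le hkm hx hW), fun y' _ hxy' => ?_⟩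
  rw [← apply_lie_eq_apply_lie hinv, hxπ, map_neg, LinearMap.neg_apply,
    (lie_mem_iff_mem_orthogonal hinv hm x y').1 hxy' _ hW, neg_zero]

theorem exists_proj_eq_of_mem_kernel [FiniteDimensional K L] (hrefl : BilinForm.IsRefl B)
    (hanis : ∀ v, B v v = 0 → v = 0) (hinv : ∀ x y z : L, B ⁅z, x⁆ y + B x ⁅z, y⁆ = 0)
    (hm : ∀ y : L, y ∈ m ↔ ∀ z ∈ k, B z y = 0) (hkm : ∀ z ∈ k, ∀ y ∈ m, ⁅z, y⁆ ∈ m)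
    (hπm : ∀ x : L, π x ∈ m) (hπk : ∀ x : L, x - π x ∈ k) {x y : L} (hx : x ∈ m)
    (hy : y ∈ m) (hxy : ⁅x, y⁆ ∈ m)
    (hker : ∀ y' : L, y' ∈ m → ⁅x, y'⁆ ∈ m → B x ⁅y, y'⁆ = 0) :
    ∃ z, ⁅x, z⁆ = 0 ∧ π z = y := by
  obtain ⟨u, hu, hxu⟩ : ⁅x, y⁆ ∈ k.toSubmodule.map (ad K L x) :=
    mem_of_forall_mem_orthogonal hrefl hanis (map_ad_le hkm hx) hxy fun v hv hvW => by
      rw [apply_lie_eq_apply_lie hinv]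
      exact hker v hv ((lie_mem_iff_mem_orthogonal hinv hm x v).2 hvW)
  refine ⟨y - u, by simp [lie_sub, ← hxu], proj_eq_of_mem_of_sub_mem hanis hm hπm hπk hy ?_⟩
  simpa using k.neg_mem hu

end ReductiveDecomposition

theorem stmt2 {g : Type*} [LieRing g] [LieAlgebra ℝ g] [FiniteDimensional ℝ g]
    -- an ad-invariant inner product on g
    (B : g →ₗ[ℝ] g →ₗ[ℝ] ℝ)
    (hsymm : ∀ x y : g, B x y = B y x)
    (hpos : ∀ x : g, x ≠ 0 → 0 < B x x)
    (hinv : ∀ x y z : g, B ⁅z, x⁆ y + B x ⁅z, y⁆ = 0)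
    -- a Lie subalgebra k and its orthogonal complement m
    (k : LieSubalgebra ℝ g)
    (m : Submodule ℝ g)
    (hm : ∀ y : g, y ∈ m ↔ ∀ z ∈ k, B z y = 0)
    (hkm : ∀ z ∈ k, ∀ y ∈ m, ⁅z, y⁆ ∈ m)
    -- the projection of g onto m along k
    (π : g →ₗ[ℝ] g)
    (hπm : ∀ x : g, π x ∈ m)
    (hπk : ∀ x : g, x - π x ∈ k) :
    ∀ x ∈ m,
      ({y : g | y ∈ m ∧ ⁅x, y⁆ ∈ m ∧
          ∀ y' : g, y' ∈ m → ⁅x, y'⁆ ∈ m → B x ⁅y, y'⁆ = 0}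
        = π '' {z : g | ⁅x, z⁆ = 0})
      ∧ (π '' {z : g | ⁅x, z⁆ = 0} ⊆ {y : g | y ∈ m ∧ ⁅x, y⁆ ∈ m}) := by
  intro x hx
  have hanis : ∀ v, B v v = 0 → v = 0 := fun v hv => not_imp_comm.1 (hpos v) hv.not_gt
  have hrefl : BilinForm.IsRefl B := fun a b h => by rwa [hsymm]
  have himage : π '' {z : g | ⁅x, z⁆ = 0} ⊆
      {y : g | y ∈ m ∧ ⁅x, y⁆ ∈ m ∧ ∀ y' : g, y' ∈ m → ⁅x, y'⁆ ∈ m → B x ⁅y, y'⁆ = 0} := by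
    rintro _ ⟨z, hz, rfl⟩
    exact ReductiveDecomposition.proj_mem_kernel hinv hm hkm hπm hπk hx hz
  refine ⟨himage.antisymm' ?_, fun y hy => ⟨(himage hy).1, (himage hy).2.1⟩⟩
  rintro y ⟨hy, hxy, hker⟩
  exact ReductiveDecomposition.exists_proj_eq_of_mem_kernel hrefl hanis hinv hm hkm hπm hπk hx
    hy hxy hker
end

section
/- For every x ∈ m and every λ ∈ ℂ, the kernel of the complex bilinear form B_x^λ(y1,y2) = ⟨x + λa, [y1,y2]⟩ on m^ℂ(x) equals the projection ((g^ℂ)^{x+λa})_{m^ℂ} of the centralizer of x + λa in g^ℂ onto m^ℂ along k^ℂ; that is, {y ∈ m^ℂ(x) : ⟨x+λa,[y,y']⟩ = 0 for all y' ∈ m^ℂ(x)} = ((g^ℂ)^{x+λa})_{m^ℂ}, and in particular ((g^ℂ)^{x+λa})_{m^ℂ} ⊆ m^ℂ(x). -/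
/-! After complexification, `B` becomes a symmetric, invariant, nondegenerate form on `g^ℂ` for
which `m^ℂ = (k^ℂ)^⊥`, `[k^ℂ, m^ℂ] ⊆ m^ℂ` and `λa` centralizes `k^ℂ`; the argument only uses these
facts. By invariance, `m^ℂ(x)` is the orthogonal of `k^ℂ + [x, k^ℂ]`, and `Y ∈ m^ℂ(x)` lies in the
radical of `B_x^λ` iff `[x + λa, Y]` is orthogonal to `m^ℂ(x)`, i.e. (by nondegeneracy) lies in
`k^ℂ + [x, k^ℂ]`. Since `[x + λa, Y] ∈ m^ℂ`, this means `[x + λa, Y] = [x, ζ]` for some `ζ ∈ k^ℂ`;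
as `[λa, ζ] = 0`, that says `Y - ζ` centralizes `x + λa`, and `Y` is its projection to `m^ℂ`. -/

open Module TensorProduct

universe u v w

namespace LinearMap.BilinForm

section Orthogonal

variable {R : Type u} {V : Type v} [CommRing R] [AddCommGroup V] [Module R V]
  {Φ : LinearMap.BilinForm R V} {K M : Submodule R V}

theorem eq_zero_of_mem_orthogonal_self (hrefl : Φ.IsRefl) (hΦ : Φ.SeparatingRight)
    (hMK : M ≤ Φ.orthogonal K) (hsup : K ⊔ M = ⊤) {z : V} (hzK : z ∈ K)
    (hz : z ∈ Φ.orthogonal K) : z = 0 := by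
  refine hΦ z fun W => ?_
  obtain ⟨w, hw, v, hv, rfl⟩ := Submodule.mem_sup.1 (hsup ▸ Submodule.mem_top : W ∈ K ⊔ M)
  rw [map_add, LinearMap.add_apply, hz w hw, hrefl _ _ (hMK hv z hzK), add_zero]

theorem orthogonal_eq_of_sup_eq_top (hrefl : Φ.IsRefl) (hΦ : Φ.SeparatingRight)
    (hMK : M ≤ Φ.orthogonal K) (hsup : K ⊔ M = ⊤) : Φ.orthogonal K = M := by
  refine le_antisymm (fun X hX => ?_) hMK
  obtain ⟨z, hz, y, hy, rfl⟩ := Submodule.mem_sup.1 (hsup ▸ Submodule.mem_top : X ∈ K ⊔ M)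
  have hz' : z ∈ Φ.orthogonal K := by
    simpa using Submodule.sub_mem _ hX (hMK hy)
  rwa [eq_zero_of_mem_orthogonal_self hrefl hΦ hMK hsup hz hz', zero_add]

end Orthogonal

section Lie

variable {R : Type u} {L : Type v} [CommRing R] [LieRing L] [LieAlgebra R L]
  {Φ : LinearMap.BilinForm R L} {K M : Submodule R L}

theorem lieInvariant.apply_lie_eq (hinv : Φ.lieInvariant L) (u W Y : L) :
    Φ u ⁅W, Y⁆ = Φ ⁅u, W⁆ Y := by
  rw [← lie_skew u W, map_neg, LinearMap.neg_apply, hinv, neg_neg]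

theorem lieInvariant.lie_mem_orthogonal (hinv : Φ.lieInvariant L)
    (hK : ∀ w ∈ K, ∀ z ∈ K, ⁅w, z⁆ ∈ K) {z y : L} (hz : z ∈ K) (hy : y ∈ Φ.orthogonal K) :
    ⁅z, y⁆ ∈ Φ.orthogonal K := fun w hw => by
  rw [apply_lie_eq hinv, ← lie_skew, map_neg, LinearMap.neg_apply, hy _ (hK z hz w hw), neg_zero]

theorem mem_orthogonal_sup_map_ad_iff (hinv : Φ.lieInvariant L) (horth : Φ.orthogonal K = M)
    (X Y : L) :
    Y ∈ Φ.orthogonal (K ⊔ K.map (LieAlgebra.ad R L X)) ↔ Y ∈ M ∧ ⁅X, Y⁆ ∈ M := by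
  simp only [← horth, mem_orthogonal_iff, Submodule.mem_sup, Submodule.mem_map,
    LieAlgebra.ad_apply]
  constructor
  · intro h
    refine ⟨fun w hw => h w ⟨w, hw, 0, ⟨0, K.zero_mem, lie_zero X⟩, add_zero w⟩, fun w hw => ?_⟩
    have := h ⁅X, w⁆ ⟨0, K.zero_mem, _, ⟨w, hw, rfl⟩, zero_add _⟩
    rwa [hinv, neg_eq_zero] at this
  · rintro ⟨hY, hXY⟩ _ ⟨w, hw, _, ⟨v, hv, rfl⟩, rfl⟩
    rw [map_add, LinearMap.add_apply, hY w hw, hinv, hXY v hv, neg_zero, add_zero]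

end Lie

theorem radical_lie_eq_image_centralizer {𝕜 : Type u} {L : Type v} [Field 𝕜] [LieRing L]
    [LieAlgebra 𝕜 L] [FiniteDimensional 𝕜 L] {Φ : LinearMap.BilinForm 𝕜 L}
    {K M : Submodule 𝕜 L} (hrefl : Φ.IsRefl) (hnd : Φ.Nondegenerate) (hinv : Φ.lieInvariant L)
    (hMK : M ≤ Φ.orthogonal K) (hlie : ∀ w ∈ K, ∀ y ∈ M, ⁅w, y⁆ ∈ M) (π : L → L)
    (hπM : ∀ W, π W ∈ M) (hπK : ∀ W, W - π W ∈ K) {X z : L} (hX : X ∈ M) (hz : z ∈ K)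
    (hzK : ∀ w ∈ K, ⁅z, w⁆ = 0) :
    {Y | Y ∈ M ∧ ⁅X, Y⁆ ∈ M ∧
        ∀ Y', Y' ∈ M → ⁅X, Y'⁆ ∈ M → Φ (X + z) ⁅Y, Y'⁆ = 0} = π '' {Z | ⁅X + z, Z⁆ = 0} := by
  have hsup : K ⊔ M = ⊤ :=
    eq_top_iff.2 fun W _ => by simpa using Submodule.add_mem_sup (hπK W) (hπM W)
  have horth := orthogonal_eq_of_sup_eq_top hrefl hnd.2 hMK hsup
  have hXK : ∀ w ∈ K, ⁅X, w⁆ ∈ M := fun w hw => by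
    rw [← lie_skew]; exact M.neg_mem (hlie w hw X hX)
  have hdisj : ∀ q ∈ K, q ∈ M → q = 0 := fun q hqK hqM =>
    eq_zero_of_mem_orthogonal_self hrefl hnd.2 hMK hsup hqK (hMK hqM)
  ext Y
  constructor
  · rintro ⟨hYM, hXY, hrad⟩
    -- the radical condition says that `⁅X + z, Y⁆` is orthogonal to `(K + ⁅X, K⁆)^⊥`
    have hmem : ⁅X + z, Y⁆ ∈ K ⊔ K.map (LieAlgebra.ad 𝕜 L X) := by
      rw [← orthogonal_orthogonal hnd hrefl (K ⊔ _)]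
      intro Y' hY'
      obtain ⟨hY'M, hXY'⟩ := (mem_orthogonal_sup_map_ad_iff hinv horth X Y').1 hY'
      exact hrefl _ _ (by rw [← hinv.apply_lie_eq]; exact hrad Y' hY'M hXY')
    obtain ⟨k₀, hk₀, _, ⟨ζ, hζ, rfl⟩, hsum⟩ := Submodule.mem_sup.1 hmem
    rw [LieAlgebra.ad_apply] at hsum
    have hk₀M : k₀ ∈ M := by
      rw [eq_sub_of_add_eq hsum, add_lie]
      exact M.sub_mem (M.add_mem hXY (hlie z hz Y hYM)) (hXK ζ hζ)
    rw [hdisj k₀ hk₀ hk₀M, zero_add] at hsum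
    refine ⟨Y - ζ, ?_, ?_⟩
    · show ⁅X + z, Y - ζ⁆ = 0
      rw [lie_sub, ← hsum, add_lie, hzK ζ hζ, add_zero, sub_self]
    · have hK : π (Y - ζ) - Y ∈ K := by
        convert K.neg_mem (K.add_mem (hπK (Y - ζ)) hζ) using 1; abel
      exact sub_eq_zero.1 (hdisj _ hK (M.sub_mem (hπM _) hYM))
  · rintro ⟨Z, hZ, rfl⟩
    have hζ := hπK Z
    have hcomm : ⁅X + z, π Z⁆ = -⁅X, Z - π Z⁆ := by
      rw [show π Z = Z - (Z - π Z) by abel, lie_sub, hZ, add_lie, hzK _ hζ, add_zero,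
        zero_sub, sub_sub_cancel]
    refine ⟨hπM Z, ?_, fun Y' _ hXY' => ?_⟩
    · rw [show ⁅X, π Z⁆ = ⁅X + z, π Z⁆ - ⁅z, π Z⁆ by rw [add_lie, add_sub_cancel_right], hcomm]
      exact M.sub_mem (M.neg_mem (hXK _ hζ)) (hlie z hz _ (hπM Z))
    · rw [hinv.apply_lie_eq, hcomm, map_neg, LinearMap.neg_apply, hinv, hMK hXY' _ hζ,
        neg_zero, neg_zero]

end LinearMap.BilinForm

section BaseChange

theorem Submodule.apply_mem_of_mem_baseChange {R A M N P : Type*} [CommSemiring R]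
    [CommSemiring A] [Algebra R A] [AddCommMonoid M] [Module R M] [AddCommMonoid N] [Module R N]
    [AddCommMonoid P] [Module A P] (Φ : A ⊗[R] M →ₗ[A] A ⊗[R] N →ₗ[A] P)
    {p : Submodule R M} {q : Submodule R N} {S : Submodule A P}
    (h : ∀ x ∈ p, ∀ y ∈ q, Φ (1 ⊗ₜ x) (1 ⊗ₜ y) ∈ S) {X : A ⊗[R] M} {Y : A ⊗[R] N}
    (hX : X ∈ p.baseChange A) (hY : Y ∈ q.baseChange A) : Φ X Y ∈ S := by
  have hq : ∀ x ∈ p, q.baseChange A ≤ S.comap (Φ (1 ⊗ₜ x)) := fun x hx => by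
    rw [baseChange_eq_span, span_le]
    rintro _ ⟨y, hy, rfl⟩
    exact h x hx y hy
  have hp : p.baseChange A ≤ S.comap (Φ.flip Y) := by
    rw [baseChange_eq_span, span_le]
    rintro _ ⟨x, hx, rfl⟩
    exact hq x hx hY
  exact hp hX

theorem LinearMap.BilinForm.eq_baseChange_of_tmul_one {R A M : Type*} [CommSemiring R]
    [CommSemiring A] [Algebra R A] [AddCommMonoid M] [Module R M]
    {Φ : LinearMap.BilinForm A (A ⊗[R] M)} {B : LinearMap.BilinForm R M}
    (h : ∀ x y, Φ (1 ⊗ₜ x) (1 ⊗ₜ y) = algebraMap R A (B x y)) : Φ = B.baseChange A := by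
  ext x y
  simp [h, baseChange_tmul, Algebra.algebraMap_eq_smul_one]

variable {R : Type u} {A : Type v} {L : Type w} [CommRing R] [CommRing A] [Algebra R A]
  [LieRing L] [LieAlgebra R L]

theorem Submodule.lie_mem_baseChange {p q r : Submodule R L} (h : ∀ x ∈ p, ∀ y ∈ q, ⁅x, y⁆ ∈ r)
    {X Y : A ⊗[R] L} (hX : X ∈ p.baseChange A) (hY : Y ∈ q.baseChange A) :
    ⁅X, Y⁆ ∈ r.baseChange A :=
  apply_mem_of_mem_baseChange (LinearMap.mk₂ A (⁅·, ·⁆) add_lie smul_lie lie_add lie_smul)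
    (fun x hx y hy => by
      simpa [LieAlgebra.ExtendScalars.bracket_tmul] using
        tmul_mem_baseChange_of_mem (1 : A) (h x hx y hy))
    hX hY

theorem Submodule.lie_one_tmul_eq_zero_of_mem_baseChange {x : L} {q : Submodule R L}
    (h : ∀ y ∈ q, ⁅x, y⁆ = 0) {Y : A ⊗[R] L} (hY : Y ∈ q.baseChange A) :
    ⁅(1 : A) ⊗ₜ[R] x, Y⁆ = 0 := by
  have hx : ∀ x' ∈ R ∙ x, ∀ y ∈ q, ⁅x', y⁆ ∈ (⊥ : Submodule R L) := by
    intro _ hx' y hy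
    obtain ⟨c, rfl⟩ := mem_span_singleton.1 hx'
    simp [h y hy]
  simpa using lie_mem_baseChange hx (tmul_mem_baseChange_of_mem 1 (mem_span_singleton_self x)) hY

namespace LinearMap.BilinForm

theorem le_orthogonal_baseChange {B : LinearMap.BilinForm R L} {p q : Submodule R L}
    (hpq : q ≤ B.orthogonal p) : q.baseChange A ≤ (B.baseChange A).orthogonal (p.baseChange A) :=
  fun _ hY _ hX => (Submodule.mem_bot A).1 <|
    Submodule.apply_mem_of_mem_baseChange (B.baseChange A)
      (fun x hx y hy => by simp [baseChange_tmul, hpq hy x hx]) hX hY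

theorem lieInvariant.baseChange {B : LinearMap.BilinForm R L} (hB : B.lieInvariant L) :
    (B.baseChange A).lieInvariant (A ⊗[R] L) := by
  intro X Y Z
  induction X using TensorProduct.induction_on with
  | zero => simp
  | add X X' hX hX' => simp only [add_lie, map_add, LinearMap.add_apply, hX, hX', neg_add]
  | tmul a u =>
  induction Y using TensorProduct.induction_on with
  | zero => simp
  | add Y Y' hY hY' => simp only [lie_add, map_add, LinearMap.add_apply, hY, hY', neg_add]
  | tmul b v =>
  induction Z using TensorProduct.induction_on with
  | zero => simp
  | add Z Z' hZ hZ' => simp only [lie_add, map_add, hZ, hZ', neg_add]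
  | tmul c w =>
  simp only [LieAlgebra.ExtendScalars.bracket_tmul, baseChange_tmul, hB u v w, neg_smul]
  ring_nf

end LinearMap.BilinForm

end BaseChange

theorem TensorProduct.exists_eq_one_tmul_add_I_smul {V : Type*} [AddCommGroup V] [Module ℝ V]
    (X : ℂ ⊗[ℝ] V) : ∃ u v : V, X = (1 : ℂ) ⊗ₜ u + Complex.I • ((1 : ℂ) ⊗ₜ v) := by
  induction X using TensorProduct.induction_on with
  | zero => exact ⟨0, 0, by simp⟩
  | tmul c w =>
    refine ⟨c.re • w, c.im • w, ?_⟩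
    rw [tmul_smul, tmul_smul, smul_tmul', smul_tmul', smul_tmul', Complex.real_smul,
      Complex.real_smul, smul_eq_mul, ← add_tmul]
    congr 1
    simp [Complex.ext_iff]
  | add X Y hX hY =>
    obtain ⟨u, v, rfl⟩ := hX
    obtain ⟨u', v', rfl⟩ := hY
    exact ⟨u + u', v + v', by rw [tmul_add, tmul_add, smul_add]; abel⟩

theorem LinearMap.SeparatingLeft.baseChange_complex {V : Type*} [AddCommGroup V]
    [Module ℝ V] {B : LinearMap.BilinForm ℝ V} (hB : B.SeparatingLeft) :
    (B.baseChange ℂ).SeparatingLeft := by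
  intro X hX
  obtain ⟨u, v, rfl⟩ := TensorProduct.exists_eq_one_tmul_add_I_smul X
  have huv : ∀ w, B u w = 0 ∧ B v w = 0 := fun w => by
    have h : (B u w : ℂ) + Complex.I * B v w = 0 := by
      simpa [LinearMap.BilinForm.baseChange_tmul] using hX ((1 : ℂ) ⊗ₜ w)
    simpa [Complex.ext_iff] using h
  rw [hB u fun w => (huv w).1, hB v fun w => (huv w).2]
  simp

theorem stmt3 {g : Type*} [LieRing g] [LieAlgebra ℝ g] [FiniteDimensional ℝ g]
    -- an ad-invariant inner product on g
    (B : g →ₗ[ℝ] g →ₗ[ℝ] ℝ)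
    (hsymm : ∀ x y : g, B x y = B y x)
    (hpos : ∀ x : g, x ≠ 0 → 0 < B x x)
    (hinv : ∀ x y z : g, B ⁅z, x⁆ y + B x ⁅z, y⁆ = 0)
    -- k = g^a and m = k^⊥
    (a : g) (k m : Submodule ℝ g)
    (hk : ∀ z : g, z ∈ k ↔ ⁅a, z⁆ = 0)
    (hm : ∀ y : g, y ∈ m ↔ ∀ z ∈ k, B z y = 0)
    -- the ℂ-bilinear extension of B to the complexification g^ℂ = ℂ ⊗[ℝ] g
    (Bc : (ℂ ⊗[ℝ] g) →ₗ[ℂ] (ℂ ⊗[ℝ] g) →ₗ[ℂ] ℂ)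
    (hBc : ∀ x y : g, Bc ((1:ℂ) ⊗ₜ[ℝ] x) ((1:ℂ) ⊗ₜ[ℝ] y) = (B x y : ℂ))
    -- the projection of g^ℂ onto m^ℂ along k^ℂ
    (πC : (ℂ ⊗[ℝ] g) →ₗ[ℂ] (ℂ ⊗[ℝ] g))
    (hπm : ∀ X : ℂ ⊗[ℝ] g, πC X ∈ Submodule.baseChange ℂ m)
    (hπk : ∀ X : ℂ ⊗[ℝ] g, X - πC X ∈ Submodule.baseChange ℂ k) :
    ∀ x ∈ m, ∀ Λ : ℂ,
      ({Y : ℂ ⊗[ℝ] g | Y ∈ Submodule.baseChange ℂ m ∧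
          ⁅((1:ℂ) ⊗ₜ[ℝ] x : ℂ ⊗[ℝ] g), Y⁆ ∈ Submodule.baseChange ℂ m ∧
          ∀ Y' : ℂ ⊗[ℝ] g, Y' ∈ Submodule.baseChange ℂ m →
            ⁅((1:ℂ) ⊗ₜ[ℝ] x : ℂ ⊗[ℝ] g), Y'⁆ ∈ Submodule.baseChange ℂ m →
            Bc ((1:ℂ) ⊗ₜ[ℝ] x + Λ • ((1:ℂ) ⊗ₜ[ℝ] a)) ⁅Y, Y'⁆ = 0}
        = πC '' {Z : ℂ ⊗[ℝ] g | ⁅((1:ℂ) ⊗ₜ[ℝ] x + Λ • ((1:ℂ) ⊗ₜ[ℝ] a) : ℂ ⊗[ℝ] g), Z⁆ = 0})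
      ∧ (πC '' {Z : ℂ ⊗[ℝ] g | ⁅((1:ℂ) ⊗ₜ[ℝ] x + Λ • ((1:ℂ) ⊗ₜ[ℝ] a) : ℂ ⊗[ℝ] g), Z⁆ = 0}
          ⊆ {Y : ℂ ⊗[ℝ] g | Y ∈ Submodule.baseChange ℂ m ∧
              ⁅((1:ℂ) ⊗ₜ[ℝ] x : ℂ ⊗[ℝ] g), Y⁆ ∈ Submodule.baseChange ℂ m}) := by
  have hinvB : LinearMap.BilinForm.lieInvariant g B := fun z x y =>
    eq_neg_of_add_eq_zero_left (hinv x y z)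
  have hmk : LinearMap.BilinForm.orthogonal B k = m := Submodule.ext fun y => (hm y).symm
  have hkk : ∀ w ∈ k, ∀ z ∈ k, ⁅w, z⁆ ∈ k := fun w hw z hz => by
    rw [hk] at hw hz ⊢
    rw [leibniz_lie, hw, hz, zero_lie, lie_zero, add_zero]
  have hkm : ∀ z ∈ k, ∀ y ∈ m, ⁅z, y⁆ ∈ m := by
    rw [← hmk]
    exact fun z hz y hy => hinvB.lie_mem_orthogonal hkk hz hy
  obtain rfl : Bc = LinearMap.BilinForm.baseChange ℂ B :=
    LinearMap.BilinForm.eq_baseChange_of_tmul_one fun x y => hBc x y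
  have hsymmC : LinearMap.IsSymm (LinearMap.BilinForm.baseChange ℂ B) :=
    LinearMap.BilinForm.IsSymm.baseChange (A := ℂ) ⟨hsymm⟩
  have hsepB : LinearMap.SeparatingLeft B := fun x hx =>
    by_contra fun h => (hpos x h).ne' (hx x)
  have hndC := hsymmC.isRefl.nondegenerate_iff_separatingLeft.2 hsepB.baseChange_complex
  intro x hx Λ
  have hrad := LinearMap.BilinForm.radical_lie_eq_image_centralizer hsymmC.isRefl hndC
    hinvB.baseChange (LinearMap.BilinForm.le_orthogonal_baseChange hmk.ge)
    (fun w hw y hy => Submodule.lie_mem_baseChange hkm hw hy) πC hπm hπk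
    (Submodule.tmul_mem_baseChange_of_mem 1 hx)
    (Submodule.smul_mem _ Λ (Submodule.tmul_mem_baseChange_of_mem 1 ((hk a).2 (lie_self a))))
    (fun w hw => by
      rw [smul_lie, Submodule.lie_one_tmul_eq_zero_of_mem_baseChange (fun z => (hk z).1) hw,
        smul_zero])
  exact ⟨hrad, hrad ▸ fun Y hY => ⟨hY.1, hY.2.1⟩⟩
end

section
/- For every x ∈ m̃ one has the direct sum decomposition m(x) = m̃(x) ⊕ (m(x) ∩ m'), where m(x) = {y ∈ m : [x,y] ∈ m} and m̃(x) = {y ∈ m̃ : [x,y] ∈ m̃}. -/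
/-!
An element `y` of `m(x)` splits as `y = ½(y + σ y) + ½(y - σ y)` into its `σ`-even and `σ`-odd
parts. Since `σ a = -a`, the involution `σ` preserves the centralizer `k = g^a`, and since it
preserves `B`, also the orthogonal complement `m`; as `σ x = x`, it moreover commutes with
`ad x`. Hence both parts of `y` and their brackets with `x` stay in `m`. The sum is direct
because a vector fixed and negated by `σ` vanishes.
-/

section Parts

variable {K M : Type*} [Field K] [AddCommGroup M] [Module K M]

def evenPart (σ : M →ₗ[K] M) (y : M) : M := (2⁻¹ : K) • (y + σ y)

def oddPart (σ : M →ₗ[K] M) (y : M) : M := (2⁻¹ : K) • (y - σ y)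

variable {σ : M →ₗ[K] M}

theorem evenPart_add_oddPart [CharZero K] (y : M) : evenPart σ y + oddPart σ y = y := by
  unfold evenPart oddPart
  module

theorem map_evenPart (hσ : Function.Involutive σ) (y : M) : σ (evenPart σ y) = evenPart σ y := by
  rw [evenPart, map_smul, map_add, hσ, add_comm]

theorem map_oddPart (hσ : Function.Involutive σ) (y : M) : σ (oddPart σ y) = -oddPart σ y := by
  rw [oddPart, map_smul, map_sub, hσ, ← smul_neg, neg_sub]

theorem evenPart_mem {p : Submodule K M} (hp : ∀ y ∈ p, σ y ∈ p) {y : M} (hy : y ∈ p) :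
    evenPart σ y ∈ p :=
  p.smul_mem _ (p.add_mem hy (hp y hy))

theorem oddPart_mem {p : Submodule K M} (hp : ∀ y ∈ p, σ y ∈ p) {y : M} (hy : y ∈ p) :
    oddPart σ y ∈ p :=
  p.smul_mem _ (p.sub_mem hy (hp y hy))

end Parts

theorem LieHom.lie_map_eq_zero_of_map_eq_neg {R L : Type*} [CommRing R] [LieRing L]
    [LieAlgebra R L] (σ : L →ₗ⁅R⁆ L) {a z : L} (ha : σ a = -a) (hz : ⁅a, z⁆ = 0) :
    ⁅a, σ z⁆ = 0 := by
  have h : σ ⁅a, z⁆ = -⁅a, σ z⁆ := by rw [LieHom.map_lie, ha, neg_lie]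
  rw [hz, map_zero, zero_eq_neg] at h
  exact h

section Lie

variable {K L : Type*} [Field K] [LieRing L] [LieAlgebra K L] (σ : L →ₗ⁅K⁆ L)

theorem lie_evenPart {x : L} (hx : σ x = x) (y : L) :
    ⁅x, evenPart (σ : L →ₗ[K] L) y⁆ = evenPart (σ : L →ₗ[K] L) ⁅x, y⁆ := by
  simp only [evenPart, lie_smul, lie_add, LieHom.coe_toLinearMap, LieHom.map_lie, hx]

theorem lie_oddPart {x : L} (hx : σ x = x) (y : L) :
    ⁅x, oddPart (σ : L →ₗ[K] L) y⁆ = oddPart (σ : L →ₗ[K] L) ⁅x, y⁆ := by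
  simp only [oddPart, lie_smul, lie_sub, LieHom.coe_toLinearMap, LieHom.map_lie, hx]

end Lie

theorem LinearMap.BilinForm.map_mem_orthogonal {R M : Type*} [CommRing R] [AddCommGroup M]
    [Module R M] (B : LinearMap.BilinForm R M) {σ : M →ₗ[R] M} (hσ : Function.Involutive σ)
    (hσB : ∀ x y, B (σ x) (σ y) = B x y) {N : Submodule R M} (hN : ∀ z ∈ N, σ z ∈ N) {y : M}
    (hy : y ∈ B.orthogonal N) : σ y ∈ B.orthogonal N := by
  rw [LinearMap.BilinForm.mem_orthogonal_iff] at hy ⊢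
  intro z hz
  rw [← hσ z, hσB]
  exact hy _ (hN z hz)

theorem stmt5_general {g : Type*} [LieRing g] [LieAlgebra ℝ g]
    -- an ad-invariant inner product on g
    (B : g →ₗ[ℝ] g →ₗ[ℝ] ℝ)
    -- an involutive automorphism σ preserving B
    (σ : g →ₗ⁅ℝ⁆ g)
    (hσ2 : ∀ x : g, σ (σ x) = x)
    (hσB : ∀ x y : g, B (σ x) (σ y) = B x y)
    -- a ∈ g', k = g^a, m = k^⊥
    (a : g) (ha : σ a = -a)
    (k m : Submodule ℝ g)
    (hk : ∀ z : g, z ∈ k ↔ ⁅a, z⁆ = 0)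
    (hm : ∀ y : g, y ∈ m ↔ ∀ z ∈ k, B z y = 0) :
    -- for every x ∈ m̃ one has m(x) = m̃(x) ⊕ (m(x) ∩ m')
    ∀ x : g, x ∈ m → σ x = x →
      -- every element of m(x) decomposes as a sum of an element of m̃(x)
      -- and an element of m(x) ∩ m'
      (∀ y : g, y ∈ m → ⁅x, y⁆ ∈ m →
        ∃ u v : g,
          (u ∈ m ∧ σ u = u ∧ ⁅x, u⁆ ∈ m ∧ σ ⁅x, u⁆ = ⁅x, u⁆) ∧
          (v ∈ m ∧ σ v = -v ∧ ⁅x, v⁆ ∈ m) ∧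
          y = u + v)
      -- m̃(x) ⊆ m(x)
      ∧ (∀ u : g, u ∈ m → σ u = u → ⁅x, u⁆ ∈ m → σ ⁅x, u⁆ = ⁅x, u⁆ →
          u ∈ m ∧ ⁅x, u⁆ ∈ m)
      -- the sum is direct: m̃(x) ∩ (m(x) ∩ m') = 0
      ∧ (∀ u : g, u ∈ m → σ u = u → ⁅x, u⁆ ∈ m → σ ⁅x, u⁆ = ⁅x, u⁆ →
          σ u = -u → u = 0) := by
  intro x _ hσx
  have hσk : ∀ z ∈ k, σ z ∈ k := fun z hz =>
    (hk _).2 (σ.lie_map_eq_zero_of_map_eq_neg ha ((hk z).1 hz))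
  have hm_eq : m = LinearMap.BilinForm.orthogonal B k :=
    Submodule.ext fun y => (hm y).trans LinearMap.BilinForm.mem_orthogonal_iff.symm
  have hσm : ∀ y ∈ m, σ y ∈ m := by
    rw [hm_eq]
    exact fun y => LinearMap.BilinForm.map_mem_orthogonal B (σ := (σ : g →ₗ[ℝ] g)) hσ2 hσB hσk
  refine ⟨fun y hy hxy => ⟨evenPart (σ : g →ₗ[ℝ] g) y, oddPart (σ : g →ₗ[ℝ] g) y,
    ⟨evenPart_mem hσm hy, map_evenPart hσ2 y, ?_, ?_⟩,
    ⟨oddPart_mem hσm hy, map_oddPart hσ2 y, ?_⟩, (evenPart_add_oddPart y).symm⟩,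
    fun u hu _ hxu _ => ⟨hu, hxu⟩, fun u _ hfix _ _ hneg =>
      have := IsAddTorsionFree.of_isTorsionFree ℝ g
      self_eq_neg.1 (hfix.symm.trans hneg)⟩
  · rw [lie_evenPart σ hσx]
    exact evenPart_mem hσm hxy
  · rw [lie_evenPart σ hσx]
    exact map_evenPart hσ2 _
  · rw [lie_oddPart σ hσx]
    exact oddPart_mem hσm hxy

theorem stmt5 {g : Type*} [LieRing g] [LieAlgebra ℝ g] [FiniteDimensional ℝ g]
    -- an ad-invariant inner product on g
    (B : g →ₗ[ℝ] g →ₗ[ℝ] ℝ)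
    (hsymm : ∀ x y : g, B x y = B y x)
    (hpos : ∀ x : g, x ≠ 0 → 0 < B x x)
    (hinv : ∀ x y z : g, B ⁅z, x⁆ y + B x ⁅z, y⁆ = 0)
    -- an involutive automorphism σ preserving B
    (σ : g →ₗ⁅ℝ⁆ g)
    (hσ2 : ∀ x : g, σ (σ x) = x)
    (hσB : ∀ x y : g, B (σ x) (σ y) = B x y)
    -- a ∈ g', k = g^a, m = k^⊥
    (a : g) (ha : σ a = -a)
    (k m : Submodule ℝ g)
    (hk : ∀ z : g, z ∈ k ↔ ⁅a, z⁆ = 0)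
    (hm : ∀ y : g, y ∈ m ↔ ∀ z ∈ k, B z y = 0) :
    -- for every x ∈ m̃ one has m(x) = m̃(x) ⊕ (m(x) ∩ m')
    ∀ x : g, x ∈ m → σ x = x →
      -- every element of m(x) decomposes as a sum of an element of m̃(x)
      -- and an element of m(x) ∩ m'
      (∀ y : g, y ∈ m → ⁅x, y⁆ ∈ m →
        ∃ u v : g,
          (u ∈ m ∧ σ u = u ∧ ⁅x, u⁆ ∈ m ∧ σ ⁅x, u⁆ = ⁅x, u⁆) ∧
          (v ∈ m ∧ σ v = -v ∧ ⁅x, v⁆ ∈ m) ∧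
          y = u + v)
      -- m̃(x) ⊆ m(x)
      ∧ (∀ u : g, u ∈ m → σ u = u → ⁅x, u⁆ ∈ m → σ ⁅x, u⁆ = ⁅x, u⁆ →
          u ∈ m ∧ ⁅x, u⁆ ∈ m)
      -- the sum is direct: m̃(x) ∩ (m(x) ∩ m') = 0
      ∧ (∀ u : g, u ∈ m → σ u = u → ⁅x, u⁆ ∈ m → σ ⁅x, u⁆ = ⁅x, u⁆ →
          σ u = -u → u = 0) :=
  stmt5_general B σ hσ2 hσB a ha k m hk hm
end

section
/- Let x ∈ m̃, let B_x be the skew-symmetric bilinear form on m(x) given by B_x(y1,y2) = ⟨x,[y1,y2]⟩, and let B̃_x be its restriction to m̃(x) ⊆ m(x). Let L ⊆ m(x) be a subspace that is maximal isotropic with respect to B_x, i.e. B_x(L,L) = 0 and every y ∈ m(x) with B_x(y,L) = 0 belongs to L. Let L̃ be the image of L under the orthogonal projection of m onto m̃. If L̃ ⊆ m̃(x) and B̃_x(L̃,L̃) = 0, then L̃ is maximal isotropic in m̃(x) with respect to B̃_x: every y ∈ m̃(x) with B̃_x(y,L̃) = 0 belongs to L̃. -/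
/-! Let `y ∈ m̃(x)` be `B̃_x`-orthogonal to `L̃ = P(L)`. By invariance,
`B_x(y, z - P z) = ⟨[x, y], z - P z⟩`, which vanishes because `[x, y] ∈ m̃`; so `y` is
`B_x`-orthogonal to all of `L`, and maximality of `L` gives `y ∈ L`. Since `y ∈ m̃`, `y = P y ∈ L̃`. -/

section Projection

variable {R V : Type*} [CommRing R] [AddCommGroup V] [Module R V]
  {B : V →ₗ[R] V →ₗ[R] R} {S : Submodule R V} {P : V →ₗ[R] V}

theorem projection_apply_of_mem (hanis : ∀ v, B v v = 0 → v = 0) (hPmem : ∀ v, P v ∈ S)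
    (hPorth : ∀ v, ∀ w ∈ S, B (v - P v) w = 0) {v : V} (hv : v ∈ S) : P v = v :=
  (sub_eq_zero.mp (hanis _ (hPorth v _ (S.sub_mem hv (hPmem v))))).symm

end Projection

section Invariant

variable {R g : Type*} [CommRing R] [LieRing g] [LieAlgebra R g] {B : g →ₗ[R] g →ₗ[R] R}

theorem apply_lie_apply_of_invariant (hinv : ∀ x y z : g, B ⁅z, x⁆ y + B x ⁅z, y⁆ = 0)
    (x y z : g) : B ⁅x, y⁆ z = B x ⁅y, z⁆ := by
  rw [eq_comm, ← neg_eq_iff_add_eq_zero.mpr (hinv x z y), ← lie_skew, map_neg, LinearMap.neg_apply, neg_neg]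

theorem apply_lie_projection_eq (hsymm : ∀ u v : g, B u v = B v u)
    (hinv : ∀ x y z : g, B ⁅z, x⁆ y + B x ⁅z, y⁆ = 0) {S : Submodule R g} {P : g →ₗ[R] g}
    (hPorth : ∀ v, ∀ w ∈ S, B (v - P v) w = 0) {x y : g} (hxy : ⁅x, y⁆ ∈ S) (z : g) :
    B x ⁅y, P z⁆ = B x ⁅y, z⁆ := by
  have hperp : B x ⁅y, z - P z⁆ = 0 := by
    rw [← apply_lie_apply_of_invariant hinv, hsymm]
    exact hPorth z _ hxy
  rw [lie_sub, map_sub, sub_eq_zero] at hperp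
  exact hperp.symm

end Invariant

theorem stmt6_general {g : Type*} [LieRing g] [LieAlgebra ℝ g]
    -- an ad-invariant inner product on g
    (B : g →ₗ[ℝ] g →ₗ[ℝ] ℝ)
    (hsymm : ∀ x y : g, B x y = B y x)
    (hpos : ∀ x : g, x ≠ 0 → 0 < B x x)
    (hinv : ∀ x y z : g, B ⁅z, x⁆ y + B x ⁅z, y⁆ = 0)
    -- an involutive automorphism σ preserving B
    (σ : g →ₗ⁅ℝ⁆ g)
    -- a ∈ g', k = g^a, m = k^⊥
    (m : Submodule ℝ g)
    -- P : the orthogonal projection of g onto m̃ = m ∩ g̃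
    (P : g →ₗ[ℝ] g)
    (hPmem : ∀ v : g, P v ∈ m ∧ σ (P v) = P v)
    (hPorth : ∀ v w : g, w ∈ m → σ w = w → B (v - P v) w = 0)
    -- x ∈ m̃
    (x : g)
    -- L ⊆ m(x) is maximal isotropic w.r.t. B_x(y₁,y₂) = ⟨x,[y₁,y₂]⟩
    (L : Submodule ℝ g)
    (hLmax : ∀ y : g, y ∈ m → ⁅x, y⁆ ∈ m → (∀ z ∈ L, B x ⁅y, z⁆ = 0) → y ∈ L) :
    -- then L̃ is maximal isotropic in m̃(x)
    ∀ y : g, y ∈ m → σ y = y → ⁅x, y⁆ ∈ m → σ ⁅x, y⁆ = ⁅x, y⁆ →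
      (∀ z ∈ P '' (L : Set g), B x ⁅y, z⁆ = 0) → y ∈ P '' (L : Set g) := by
  intro y hym hyσ hxym hxyσ hyLt
  let mt : Submodule ℝ g := m ⊓ LinearMap.eqLocus (σ : g →ₗ[ℝ] g) LinearMap.id
  have hPmem' : ∀ v, P v ∈ mt := hPmem
  have hPorth' : ∀ v, ∀ w ∈ mt, B (v - P v) w = 0 := fun v w hw => hPorth v w hw.1 hw.2
  have hanis : ∀ v, B v v = 0 → v = 0 := fun v hv => by_contra fun h => (hpos v h).ne' hv
  have hy : y ∈ L := hLmax y hym hxym fun z hz => by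
    rw [← apply_lie_projection_eq hsymm hinv hPorth' (S := mt) ⟨hxym, hxyσ⟩]
    exact hyLt _ ⟨z, hz, rfl⟩
  exact ⟨y, hy, projection_apply_of_mem hanis hPmem' hPorth' ⟨hym, hyσ⟩⟩

theorem stmt6 {g : Type*} [LieRing g] [LieAlgebra ℝ g] [FiniteDimensional ℝ g]
    -- an ad-invariant inner product on g
    (B : g →ₗ[ℝ] g →ₗ[ℝ] ℝ)
    (hsymm : ∀ x y : g, B x y = B y x)
    (hpos : ∀ x : g, x ≠ 0 → 0 < B x x)
    (hinv : ∀ x y z : g, B ⁅z, x⁆ y + B x ⁅z, y⁆ = 0)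
    -- an involutive automorphism σ preserving B
    (σ : g →ₗ⁅ℝ⁆ g)
    (hσ2 : ∀ x : g, σ (σ x) = x)
    (hσB : ∀ x y : g, B (σ x) (σ y) = B x y)
    -- a ∈ g', k = g^a, m = k^⊥
    (a : g) (ha : σ a = -a)
    (k m : Submodule ℝ g)
    (hk : ∀ z : g, z ∈ k ↔ ⁅a, z⁆ = 0)
    (hm : ∀ y : g, y ∈ m ↔ ∀ z ∈ k, B z y = 0)
    -- P : the orthogonal projection of g onto m̃ = m ∩ g̃
    (P : g →ₗ[ℝ] g)
    (hPmem : ∀ v : g, P v ∈ m ∧ σ (P v) = P v)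
    (hPorth : ∀ v w : g, w ∈ m → σ w = w → B (v - P v) w = 0)
    -- x ∈ m̃
    (x : g) (hx : x ∈ m) (hxσ : σ x = x)
    -- L ⊆ m(x) is maximal isotropic w.r.t. B_x(y₁,y₂) = ⟨x,[y₁,y₂]⟩
    (L : Submodule ℝ g)
    (hLsub : ∀ y ∈ L, y ∈ m ∧ ⁅x, y⁆ ∈ m)
    (hLiso : ∀ y1 ∈ L, ∀ y2 ∈ L, B x ⁅y1, y2⁆ = 0)
    (hLmax : ∀ y : g, y ∈ m → ⁅x, y⁆ ∈ m → (∀ z ∈ L, B x ⁅y, z⁆ = 0) → y ∈ L)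
    -- L̃ = P(L) is contained in m̃(x) and is isotropic for the restricted form
    (hLt_sub : ∀ u ∈ P '' (L : Set g), u ∈ m ∧ σ u = u ∧ ⁅x, u⁆ ∈ m ∧ σ ⁅x, u⁆ = ⁅x, u⁆)
    (hLt_iso : ∀ u ∈ P '' (L : Set g), ∀ v ∈ P '' (L : Set g), B x ⁅u, v⁆ = 0) :
    -- then L̃ is maximal isotropic in m̃(x)
    ∀ y : g, y ∈ m → σ y = y → ⁅x, y⁆ ∈ m → σ ⁅x, y⁆ = ⁅x, y⁆ →
      (∀ z ∈ P '' (L : Set g), B x ⁅y, z⁆ = 0) → y ∈ P '' (L : Set g) :=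
  stmt6_general B hsymm hpos hinv σ m P hPmem hPorth x L hLmax
end

section
/- Let b ∈ z(k) ∩ g', i.e. [b,k] = 0 and σ(b) = −b. Since ad a maps m bijectively onto m, define φ_{a,b} : m → m by φ_{a,b}(x) = (ad a|_m)^{-1}([b,x]). Let h : g → ℝ be a differentiable Ad-invariant function, i.e. ⟨grad h(y),[z,y]⟩ = 0 for all y, z ∈ g. Then for all λ ∈ ℝ and all x ∈ m̃, ⟨x, [P(grad h(x + λ·a)), φ_{a,b}(x)]⟩ = 0, where P : g → m̃ is the orthogonal projection onto m̃. -/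
open Module

theorem stmt8 {g : Type*} [LieRing g] [LieAlgebra ℝ g] [FiniteDimensional ℝ g]
    -- an ad-invariant inner product on g
    (B : g →ₗ[ℝ] g →ₗ[ℝ] ℝ)
    (hsymm : ∀ x y : g, B x y = B y x)
    (hpos : ∀ x : g, x ≠ 0 → 0 < B x x)
    (hinv : ∀ x y z : g, B ⁅z, x⁆ y + B x ⁅z, y⁆ = 0)
    -- an involutive automorphism σ preserving B
    (σ : g →ₗ⁅ℝ⁆ g)
    (hσ2 : ∀ x : g, σ (σ x) = x)
    (hσB : ∀ x y : g, B (σ x) (σ y) = B x y)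
    -- a ∈ g', k = g^a, m = k^⊥
    (a : g) (ha : σ a = -a)
    (k m : Submodule ℝ g)
    (hk : ∀ z : g, z ∈ k ↔ ⁅a, z⁆ = 0)
    (hm : ∀ y : g, y ∈ m ↔ ∀ z ∈ k, B z y = 0)
    -- b ∈ z(k) ∩ g'
    (b : g)
    (hbk : ∀ z ∈ k, ⁅b, z⁆ = 0)
    (hbσ : σ b = -b)
    -- φ_{a,b} : m → m, x ↦ (ad a|_m)⁻¹ [b,x]
    (φ : g → g)
    (hφ : ∀ x ∈ m, φ x ∈ m ∧ ⁅a, φ x⁆ = ⁅b, x⁆)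
    -- P : the orthogonal projection of g onto m̃ = m ∩ g̃
    (P : g →ₗ[ℝ] g)
    (hPmem : ∀ v : g, P v ∈ m ∧ σ (P v) = P v)
    (hPorth : ∀ v w : g, w ∈ m → σ w = w → B (v - P v) w = 0)
    -- a differentiable Ad-invariant function h with gradient grad
    (h : g → ℝ) (grad : g → g)
    (hgrad : ∀ y v : g, HasDerivAt (fun t : ℝ => h (y + t • v)) (B (grad y) v) 0)
    (hinvh : ∀ y z : g, B (grad y) ⁅z, y⁆ = 0) :
    ∀ lam : ℝ, ∀ x : g, x ∈ m → σ x = x →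
      B x ⁅P (grad (x + lam • a)), φ x⁆ = 0 := by
  intro lam x hxm hxσ
  -- basic helpers
  have hswap : ∀ z u v : g, B u ⁅z, v⁆ = - B ⁅z, u⁆ v := by
    intro z u v; have := hinv u v z; linarith
  have hflip : ∀ u v : g, ⁅u, v⁆ = 0 → ⁅v, u⁆ = 0 := by
    intro u v hh
    have e := lie_skew v u
    rw [hh, neg_zero] at e
    exact e.symm
  have hzero : ∀ v : g, B v v = 0 → v = 0 := by
    intro v hv
    by_contra hne
    exact absurd hv (ne_of_gt (hpos v hne))
  have hσ0 : σ (0 : g) = 0 := by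
    have := σ.toLinearMap.map_zero
    simpa using this
  -- a, b ∈ k
  have hak : a ∈ k := (hk a).mpr (lie_self a)
  have hab : ⁅a, b⁆ = 0 := hflip b a (hbk a hak)
  have hbk' : b ∈ k := (hk b).mpr hab
  -- k is a subalgebra
  have hkk : ∀ z ∈ k, ∀ z' ∈ k, ⁅z, z'⁆ ∈ k := by
    intro z hz z' hz'
    rw [hk] at hz hz' ⊢
    rw [leibniz_lie a z z', hz, hz', zero_lie, lie_zero, add_zero]
  -- bracket of k with m lands in m
  have hbrm : ∀ z ∈ k, ∀ v ∈ m, ⁅z, v⁆ ∈ m := by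
    intro z hz v hv
    rw [hm]
    intro z' hz'
    rw [hswap z z' v, (hm v).mp hv ⁅z, z'⁆ (hkk z hz z' hz'), neg_zero]
  -- injectivity of ad a on m
  have hinj : ∀ v ∈ m, ⁅a, v⁆ = 0 → v = 0 := by
    intro v hv hav
    exact hzero v ((hm v).mp hv v ((hk v).mpr hav))
  -- σ preserves k
  have hkσ : ∀ z ∈ k, σ z ∈ k := by
    intro z hz
    rw [hk] at hz ⊢
    have e : σ ⁅a, z⁆ = - ⁅a, σ z⁆ := by
      rw [LieHom.map_lie, ha, neg_lie]
    rw [hz, hσ0] at e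
    exact neg_eq_zero.mp e.symm
  -- σ preserves m
  have hmσ : ∀ v ∈ m, σ v ∈ m := by
    intro v hv
    rw [hm]
    intro z hz
    have e : B z (σ v) = B (σ (σ z)) (σ v) := by rw [hσ2]
    rw [e, hσB]
    exact (hm v).mp hv (σ z) (hkσ z hz)
  -- facts about φ x
  obtain ⟨hφxm, hφxa⟩ := hφ x hxm
  -- surjectivity of ad a : m → m
  have hadm : ∀ v ∈ m, ⁅a, v⁆ ∈ m := fun v hv => hbrm a hak v hv
  have hsurj : ∀ v ∈ m, ∃ v' ∈ m, ⁅a, v'⁆ = v := by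
    intro v hv
    let f : m →ₗ[ℝ] m :=
      { toFun := fun u => ⟨⁅a, (u : g)⁆, hadm _ u.2⟩
        map_add' := fun u u' => Subtype.ext (by simp [lie_add])
        map_smul' := fun c u => Subtype.ext (by simp [lie_smul]) }
    have hfinj : Function.Injective f := by
      intro u u' huu
      have h1 : ⁅a, (u : g)⁆ = ⁅a, (u' : g)⁆ := congrArg Subtype.val huu
      have h2 : ⁅a, (u : g) - (u' : g)⁆ = 0 := by rw [lie_sub, h1, sub_self]
      exact Subtype.ext (sub_eq_zero.mp (hinj _ (m.sub_mem u.2 u'.2) h2))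
    have hfsurj : Function.Surjective f :=
      (LinearMap.injective_iff_surjective).mp hfinj
    obtain ⟨u, hu⟩ := hfsurj ⟨v, hv⟩
    exact ⟨u, u.2, congrArg Subtype.val hu⟩
  -- φ is symmetric on m
  have hφsym : ∀ u ∈ m, ∀ v ∈ m, B (φ u) v = B u (φ v) := by
    intro u hu v hv
    obtain ⟨v', hv'm, hv'⟩ := hsurj v hv
    obtain ⟨hφvm, hφva⟩ := hφ v hv
    have hbv'm : ⁅b, v'⁆ ∈ m := hbrm b hbk' v' hv'm
    have hφv : φ v = ⁅b, v'⁆ := by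
      have hdiff : ⁅a, φ v - ⁅b, v'⁆⁆ = 0 := by
        rw [lie_sub, hφva, leibniz_lie a b v', hab, zero_lie, zero_add, hv',
          sub_self]
      exact sub_eq_zero.mp (hinj _ (m.sub_mem hφvm hbv'm) hdiff)
    obtain ⟨hφum, hφua⟩ := hφ u hu
    calc B (φ u) v = B (φ u) ⁅a, v'⁆ := by rw [hv']
      _ = - B ⁅a, φ u⁆ v' := hswap a (φ u) v'
      _ = - B ⁅b, u⁆ v' := by rw [hφua]
      _ = B u ⁅b, v'⁆ := by rw [hswap b u v']
      _ = B u (φ v) := by rw [hφv]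
  -- general identity : B u [φx, x] = B x [u, φ x]
  have hgen : ∀ u : g, B u ⁅φ x, x⁆ = B x ⁅u, φ x⁆ := by
    intro u
    have e1 : B u ⁅φ x, x⁆ = - B ⁅φ x, u⁆ x := hswap (φ x) u x
    have e2 : - ⁅φ x, u⁆ = ⁅u, φ x⁆ := lie_skew u (φ x)
    have e3 : B ⁅u, φ x⁆ x = - B ⁅φ x, u⁆ x := by
      rw [← e2, map_neg, LinearMap.neg_apply]
    rw [e1, ← e3, hsymm]
  -- ⟨z, [φx, x]⟩ = 0 for z ∈ k
  have hkperp : ∀ z ∈ k, B z ⁅φ x, x⁆ = 0 := by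
    intro z hz
    have hzφ : ⁅z, φ x⁆ = φ ⁅z, x⁆ := by
      obtain ⟨hφzxm, hφzxa⟩ := hφ ⁅z, x⁆ (hbrm z hz x hxm)
      have hdiff : ⁅a, ⁅z, φ x⁆ - φ ⁅z, x⁆⁆ = 0 := by
        rw [lie_sub, hφzxa, leibniz_lie a z (φ x), ((hk z).mp hz), zero_lie,
          zero_add, hφxa, leibniz_lie z b x, hflip b z (hbk z hz), zero_lie,
          zero_add, sub_self]
      exact sub_eq_zero.mp
        (hinj _ (m.sub_mem (hbrm z hz (φ x) hφxm) hφzxm) hdiff)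
    have hS : B x ⁅z, φ x⁆ = - B x ⁅z, φ x⁆ := by
      calc B x ⁅z, φ x⁆ = B x (φ ⁅z, x⁆) := by rw [hzφ]
        _ = B (φ x) ⁅z, x⁆ := (hφsym x hxm ⁅z, x⁆ (hbrm z hz x hxm)).symm
        _ = - B ⁅z, φ x⁆ x := hswap z (φ x) x
        _ = - B x ⁅z, φ x⁆ := by rw [hsymm]
    have hS0 : B x ⁅z, φ x⁆ = 0 := by linarith
    rw [hgen z, hS0]
  -- [φx, x] ∈ m
  have hwm : ⁅φ x, x⁆ ∈ m := (hm _).mpr hkperp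
  -- σ (φ x) = φ x
  have hσφ : σ (φ x) = φ x := by
    have h1 : ⁅a, σ (φ x)⁆ = - σ ⁅a, φ x⁆ := by
      rw [LieHom.map_lie, ha, neg_lie, neg_neg]
    have hdiff : ⁅a, σ (φ x) - φ x⁆ = 0 := by
      rw [lie_sub, h1, hφxa, LieHom.map_lie, hbσ, hxσ, neg_lie, neg_neg,
        sub_self]
    exact sub_eq_zero.mp (hinj _ (m.sub_mem (hmσ (φ x) hφxm) hφxm) hdiff)
  -- σ [φx, x] = [φx, x]
  have hwσ : σ ⁅φ x, x⁆ = ⁅φ x, x⁆ := by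
    rw [LieHom.map_lie, hσφ, hxσ]
  set G := grad (x + lam • a) with hG
  -- [G, x + lam • a] = 0
  have hGy : ⁅G, x + lam • a⁆ = 0 := by
    apply hzero
    have h1 := hinv G ⁅G, x + lam • a⁆ (x + lam • a)
    have e1 : ⁅x + lam • a, G⁆ = -⁅G, x + lam • a⁆ :=
      (lie_skew (x + lam • a) G).symm
    have e2 : ⁅x + lam • a, ⁅G, x + lam • a⁆⁆
        = -⁅⁅G, x + lam • a⁆, x + lam • a⁆ :=
      (lie_skew (x + lam • a) ⁅G, x + lam • a⁆).symm
    rw [e1, e2] at h1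
    simp only [map_neg, LinearMap.neg_apply] at h1
    have h2 : B G ⁅⁅G, x + lam • a⁆, x + lam • a⁆ = 0 :=
      hinvh (x + lam • a) ⁅G, x + lam • a⁆
    linarith
  -- [G, x] = lam • [a, G]
  have hGx : ⁅G, x⁆ = lam • ⁅a, G⁆ := by
    have h1 : ⁅G, x⁆ + lam • ⁅G, a⁆ = 0 := by
      rw [← lie_smul, ← lie_add]; exact hGy
    have h2 : ⁅G, a⁆ = - ⁅a, G⁆ := (lie_skew G a).symm
    rw [h2, smul_neg] at h1
    exact sub_eq_zero.mp (by rwa [sub_eq_add_neg])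
  -- B G [b, x] = 0
  have hGbx : B G ⁅b, x⁆ = 0 := by
    have h1 : ⁅b, x + lam • a⁆ = ⁅b, x⁆ := by
      rw [lie_add, lie_smul, hbk a hak, smul_zero, add_zero]
    have := hinvh (x + lam • a) b
    rw [h1] at this
    exact this
  -- final computation
  have hfin : B x ⁅G, φ x⁆ = 0 := by
    have h1 : B x ⁅G, φ x⁆ = - B ⁅G, x⁆ (φ x) := hswap G x (φ x)
    rw [h1, hGx, map_smul, LinearMap.smul_apply]
    have h2 : B ⁅a, G⁆ (φ x) = - B G ⁅a, φ x⁆ := by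
      have := hswap a G (φ x); linarith
    rw [h2, hφxa, hGbx]
    simp
  calc B x ⁅P G, φ x⁆ = B (P G) ⁅φ x, x⁆ := (hgen (P G)).symm
    _ = B G ⁅φ x, x⁆ - B (G - P G) ⁅φ x, x⁆ := by
        rw [map_sub, LinearMap.sub_apply]; ring
    _ = B G ⁅φ x, x⁆ - 0 := by rw [hPorth G ⁅φ x, x⁆ hwm hwσ]
    _ = B x ⁅G, φ x⁆ := by rw [sub_zero, hgen G]
    _ = 0 := hfin
end

section
/- Let n ≥ 1 and let A be an n×n complex matrix such that A_{j+1,j} ≠ 0 for every j with 1 ≤ j ≤ n−1, and A_{i,j} = 0 whenever i > j+1 (an unreduced lower Hessenberg matrix). Then the centralizer {B ∈ M_n(ℂ) : AB = BA} is a complex subspace of dimension exactly n. -/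
/-!
If `v` is a cyclic vector of `A`, i.e. the vectors `A ^ k *ᵥ v` span, then `B ↦ B *ᵥ v` is an
isomorphism from the centralizer of `A` onto `ι → K`: a `B` commuting with `A` and killing `v`
kills every `A ^ k *ᵥ v`, and every `A ^ k *ᵥ v` is hit by `A ^ k` itself.

For an unreduced lower Hessenberg matrix the first basis vector `e₀` is cyclic: `A ^ k *ᵥ e₀`
vanishes below row `k` and its `k`-th entry is the product of `k` subdiagonal entries, so the
Krylov matrix with columns `A ^ k *ᵥ e₀` is upper triangular with nonzero diagonal.
-/

open Module

/-- The centralizer of a matrix `A` as a `ℂ`-subspace of the matrix algebra. -/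
noncomputable def matCentC (n : ℕ) (A : Matrix (Fin n) (Fin n) ℂ) :
    Submodule ℂ (Matrix (Fin n) (Fin n) ℂ) where
  carrier := {B | A * B = B * A}
  add_mem' := by
    intro X Y hX hY
    simp only [Set.mem_setOf_eq] at *
    rw [Matrix.mul_add, Matrix.add_mul, hX, hY]
  zero_mem' := by simp
  smul_mem' := by
    intro c X hX
    simp only [Set.mem_setOf_eq] at *
    rw [Matrix.mul_smul, Matrix.smul_mul, hX]

namespace Matrix

section Cyclic

variable {K ι : Type*} [Field K] [Fintype ι] [DecidableEq ι] {A : Matrix ι ι K} {v : ι → K}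

theorem eq_zero_of_mem_centralizer_of_mulVec_eq_zero
    (hv : Submodule.span K (Set.range fun k : ℕ => (A ^ k) *ᵥ v) = ⊤)
    {B : Matrix ι ι K} (hB : B ∈ Subalgebra.centralizer K {A}) (hBv : B *ᵥ v = 0) : B = 0 := by
  have hAB : Commute A B := (Subalgebra.mem_centralizer_iff K).1 hB A rfl
  refine toLin'.injective (LinearMap.ext_on_range hv fun k => ?_)
  rw [toLin'_apply, mulVec_mulVec, ← (hAB.pow_left k).eq, ← mulVec_mulVec, hBv]
  simp

theorem finrank_centralizer_of_span_pow_mulVec_eq_top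
    (hv : Submodule.span K (Set.range fun k : ℕ => (A ^ k) *ᵥ v) = ⊤) :
    finrank K (Subalgebra.centralizer K {A}) = Fintype.card ι := by
  let eval : Subalgebra.centralizer K {A} →ₗ[K] ι → K :=
    { toFun B := (B : Matrix ι ι K) *ᵥ v
      map_add' B C := add_mulVec _ _ _
      map_smul' c B := smul_mulVec _ _ _ }
  have hinj : Function.Injective eval := by
    refine (injective_iff_map_eq_zero eval).2 fun B hB => ?_
    exact Subtype.ext (eq_zero_of_mem_centralizer_of_mulVec_eq_zero hv B.2 hB)
  have hsurj : Function.Surjective eval := by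
    refine LinearMap.range_eq_top.1 (top_le_iff.1 (hv ▸ Submodule.span_le.2 ?_))
    rintro _ ⟨k, rfl⟩
    have hA : A ∈ Subalgebra.centralizer K {A} := by simp [Subalgebra.mem_centralizer_iff]
    exact ⟨⟨A ^ k, pow_mem hA k⟩, rfl⟩
  rw [(LinearEquiv.ofBijective eval ⟨hinj, hsurj⟩).finrank_eq, finrank_fintype_fun_eq_card]

end Cyclic

section Hessenberg

variable {K : Type*} [Field K] {n : ℕ} {A : Matrix (Fin n) (Fin n) K}

theorem pow_apply_eq_zero_of_add_lt (hhess : ∀ i j : Fin n, (j : ℕ) + 1 < i → A i j = 0)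
    (k : ℕ) {i j : Fin n} (hij : (j : ℕ) + k < i) : (A ^ k) i j = 0 := by
  induction k generalizing i with
  | zero => exact one_apply_ne (Fin.ne_of_gt (by simpa using hij))
  | succ k ih =>
    rw [pow_succ', mul_apply]
    refine Finset.sum_eq_zero fun l _ => ?_
    by_cases hl : (l : ℕ) + 1 < i
    · rw [hhess i l hl, zero_mul]
    · rw [ih (by omega), mul_zero]

theorem pow_apply_mk_zero_ne_zero
    (hsub : ∀ (j : ℕ) (hj : j + 1 < n), A ⟨j + 1, hj⟩ ⟨j, Nat.lt_of_succ_lt hj⟩ ≠ 0)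
    (hhess : ∀ i j : Fin n, (j : ℕ) + 1 < i → A i j = 0)
    (k : ℕ) (hk : k < n) : (A ^ k) ⟨k, hk⟩ ⟨0, Nat.zero_lt_of_lt hk⟩ ≠ 0 := by
  induction k with
  | zero => simp
  | succ k ih =>
    rw [pow_succ', mul_apply, Finset.sum_eq_single ⟨k, by omega⟩]
    · exact mul_ne_zero (hsub k hk) (ih (by omega))
    · intro l _ hl
      rcases lt_or_gt_of_ne (Fin.val_ne_of_ne hl) with hlt | hgt
      · rw [hhess _ l (by simpa using hlt), zero_mul]
      · rw [pow_apply_eq_zero_of_add_lt hhess k (by simpa using hgt), mul_zero]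
    · simp

theorem span_pow_mulVec_single_zero_eq_top {m : ℕ} {A : Matrix (Fin (m + 1)) (Fin (m + 1)) K}
    (hsub : ∀ (j : ℕ) (hj : j + 1 < m + 1), A ⟨j + 1, hj⟩ ⟨j, Nat.lt_of_succ_lt hj⟩ ≠ 0)
    (hhess : ∀ i j : Fin (m + 1), (j : ℕ) + 1 < i → A i j = 0) :
    Submodule.span K (Set.range fun k : ℕ => (A ^ k) *ᵥ Pi.single 0 1) = ⊤ := by
  let krylov : Matrix (Fin (m + 1)) (Fin (m + 1)) K := of fun i k => (A ^ (k : ℕ)) i 0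
  have htri : krylov.IsUpperTriangular := fun i k hki =>
    pow_apply_eq_zero_of_add_lt hhess k (by simpa using hki)
  have hdet : krylov.det ≠ 0 := by
    rw [det_of_isUpperTriangular htri]
    exact Finset.prod_ne_zero_iff.2 fun i _ => pow_apply_mk_zero_ne_zero hsub hhess i i.isLt
  have hspan := (linearIndependent_cols_of_det_ne_zero hdet).span_eq_top_of_card_eq_finrank'
    (by simp)
  refine top_le_iff.1 (hspan ▸ Submodule.span_mono ?_)
  rintro _ ⟨k, rfl⟩
  exact ⟨k, by ext i; simp [krylov]⟩

end Hessenberg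

end Matrix

open Matrix

theorem matCentC_eq_centralizer (n : ℕ) (A : Matrix (Fin n) (Fin n) ℂ) :
    matCentC n A = Subalgebra.toSubmodule (Subalgebra.centralizer ℂ {A}) := by
  ext B
  simp [matCentC, Subalgebra.mem_centralizer_iff]

theorem stmt10 (n : ℕ) (hn : 1 ≤ n) (A : Matrix (Fin n) (Fin n) ℂ)
    (hsub : ∀ (j : ℕ) (hj : j + 1 < n), A ⟨j + 1, hj⟩ ⟨j, by omega⟩ ≠ 0)
    (hhess : ∀ i j : Fin n, (j : ℕ) + 1 < (i : ℕ) → A i j = 0) :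
    finrank ℂ (matCentC n A) = n := by
  obtain ⟨m, rfl⟩ := Nat.exists_eq_add_one_of_ne_zero (Nat.one_le_iff_ne_zero.1 hn)
  rw [matCentC_eq_centralizer, Subalgebra.finrank_toSubmodule,
    finrank_centralizer_of_span_pow_mulVec_eq_top (span_pow_mulVec_single_zero_eq_top hsub hhess),
    Fintype.card_fin]
end

section
/- Let l be a list of length n with entries in a type α, and suppose that every value occurs in l at most n/2 times (i.e. 2·(number of occurrences of v in l) ≤ n for each value v). Then there is a rearrangement (permutation) of l in which no two consecutive entries are equal. -/
/-!
Greedy construction. Strengthen the claim to: if every value fills at most `(n + 1) / 2` of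
the `n` entries and a given value `a` at most `n / 2`, there is an arrangement with no two
equal neighbours that does not start with `a`. Start with a most frequent value `b ≠ a`. Any
other value `v ≠ a` is at most as frequent as `b`, and together they fill at most `n` entries,
so every value but `b` fills at most `n / 2`. Hence after removing one copy of `b` the
remaining `n - 1` entries satisfy the hypothesis again, with `b` as the forbidden first entry.
-/

namespace List

variable {α : Type*} [DecidableEq α]

theorem count_add_count_le_length {a b : α} (hab : a ≠ b) (l : List α) :
    l.count a + l.count b ≤ l.length := by
  rw [length_eq_countP_add_countP (· == a)]
  refine Nat.add_le_add_left (countP_mono_left fun x _ hx => ?_) _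
  simp only [beq_iff_eq, decide_not, Bool.not_eq_true', decide_eq_false_iff_not] at hx ⊢
  exact hx ▸ hab.symm

theorem exists_mem_ne_two_mul_count_le {l : List α} {a : α} (hl : l ≠ [])
    (ha : 2 * l.count a ≤ l.length) :
    ∃ b ∈ l, b ≠ a ∧ ∀ v ≠ b, 2 * l.count v ≤ l.length := by
  have hne : (l.toFinset.filter (· ≠ a)).Nonempty := by
    have : l.count a < l.length := by
      have := length_pos_iff.2 hl
      omega
    obtain ⟨b, hb, hba⟩ := count_lt_length_iff.1 this
    exact ⟨b, by simp [hb, hba]⟩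
  -- `b` is a most frequent value other than `a`
  obtain ⟨b, hb, hmax⟩ := Finset.exists_max_image _ (l.count ·) hne
  simp only [Finset.mem_filter, mem_toFinset] at hb hmax
  refine ⟨b, hb.1, hb.2, fun v hvb => ?_⟩
  by_cases hva : v = a
  · exact hva ▸ ha
  by_cases hvl : v ∈ l
  · have := count_add_count_le_length hvb l
    have := hmax v ⟨hvl, hva⟩
    omega
  · simp [count_eq_zero_of_not_mem hvl]

theorem exists_perm_isChain_ne_head_ne (l : List α) (a : α)
    (hl : ∀ v, 2 * l.count v ≤ l.length + 1) (ha : 2 * l.count a ≤ l.length) :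
    ∃ l' : List α, l'.Perm l ∧ l'.IsChain (· ≠ ·) ∧ ∀ x ∈ l'.head?, x ≠ a := by
  induction hn : l.length generalizing l a with
  | zero => exact ⟨[], by simp_all, isChain_nil, by simp⟩
  | succ n ih =>
    obtain ⟨b, hbl, hba, hle⟩ :=
      exists_mem_ne_two_mul_count_le (ne_nil_of_length_eq_add_one hn) ha
    have hlen : (l.erase b).length = n := by simp [length_erase_of_mem hbl, hn]
    have hb : 2 * (l.erase b).count b ≤ n := by
      have := hl b
      simp only [count_erase_self]
      omega
    have hcount : ∀ v, 2 * (l.erase b).count v ≤ n + 1 := by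
      intro v
      by_cases hvb : v = b
      · exact hvb ▸ hb.trans n.le_succ
      · simpa [count_erase_of_ne hvb, hn] using hle v hvb
    obtain ⟨l', hperm, hchain, hhead⟩ :=
      ih (l.erase b) b (hlen ▸ hcount) (hlen ▸ hb) hlen
    exact ⟨b :: l', (hperm.cons b).trans (perm_cons_erase hbl).symm,
      isChain_cons.2 ⟨fun y hy => (hhead y hy).symm, hchain⟩, by simpa using hba⟩

end List

theorem stmt11 {α : Type*} [DecidableEq α] (l : List α)
    (h : ∀ v : α, 2 * l.count v ≤ l.length) :
    ∃ l' : List α, l'.Perm l ∧ l'.Chain' (· ≠ ·) := by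
  cases l with
  | nil => exact ⟨[], List.Perm.nil, List.isChain_nil⟩
  | cons x xs =>
    obtain ⟨l', hperm, hchain, -⟩ := List.exists_perm_isChain_ne_head_ne (x :: xs) x
      (fun v => (h v).trans (Nat.le_succ _)) (h x)
    exact ⟨l', hperm, hchain⟩
end

section
/- Suppose 2·n_j ≤ n for every j = 1,…,p. Then there exists a real skew-symmetric matrix x ∈ m̃ = m ∩ so(n) such that for every λ ∈ ℂ the centralizer of x + λa in M_n(ℂ) has complex dimension exactly n, i.e. dim_ℂ {Z ∈ M_n(ℂ) : (x+λa)Z = Z(x+λa)} = n. -/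
open Module Matrix

/-!
Order the indices so that consecutive ones lie in different blocks; a greedy argument does this
because no block holds more than half of them. Take for `x` the skew-symmetric adjacency matrix of
the resulting path. In the reordered basis `x + λa` is tridiagonal with nonzero subdiagonal, so the
first basis vector is cyclic, and a matrix with a cyclic vector has an `n`-dimensional centralizer.
-/

open Finset

section Arrangement

variable {α β : Type*} [DecidableEq α] [DecidableEq β] (f : α → β)

theorem card_filter_eq_add_card_filter_eq_le (s : Finset α) {c d : β} (hcd : c ≠ d) :
    #{x ∈ s | f x = c} + #{x ∈ s | f x = d} ≤ #s := by
  rw [← card_union_of_disjoint (disjoint_filter.2 fun x _ hc hd => hcd (hc.symm.trans hd))]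
  exact card_le_card (union_subset (filter_subset _ _) (filter_subset _ _))

theorem card_filter_erase_of_ne (s : Finset α) {a : α} {c : β} (hc : f a ≠ c) :
    #{x ∈ s.erase a | f x = c} = #{x ∈ s | f x = c} := by
  rw [filter_erase, erase_eq_of_notMem (by simp [hc])]

theorem card_filter_erase_self_add_one {s : Finset α} {a : α} (ha : a ∈ s) :
    #{x ∈ s.erase a | f x = f a} + 1 = #{x ∈ s | f x = f a} := by
  rw [filter_erase, card_erase_add_one (mem_filter.2 ⟨ha, rfl⟩ : a ∈ {x ∈ s | f x = f a})]

/-- Greedy step: start with an element of the most frequent colour other than `b`. -/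
theorem exists_list_isChain_ne_of_head_ne (s : Finset α) (b : β)
    (hs : ∀ c, 2 * #{x ∈ s | f x = c} ≤ #s + 1) (hb : 2 * #{x ∈ s | f x = b} ≤ #s) :
    ∃ l : List α, l.Nodup ∧ l.toFinset = s ∧ l.IsChain (fun x y => f x ≠ f y) ∧
      ∀ x ∈ l.head?, f x ≠ b := by
  induction s using Finset.strongInduction generalizing b with
  | H s ih =>
  obtain rfl | hne := s.eq_empty_or_nonempty
  · exact ⟨[], by simp⟩
  have hother : {x ∈ s | f x ≠ b}.Nonempty := by
    by_contra h
    rw [not_nonempty_iff_eq_empty, filter_eq_empty_iff] at h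
    rw [filter_true_of_mem fun x hx => not_not.1 (h hx)] at hb
    have := hne.card_pos
    omega
  obtain ⟨a, ha, hmax⟩ := exists_max_image _ (fun x => #{y ∈ s | f y = f x}) hother
  rw [mem_filter] at ha
  have hcard : #(s.erase a) + 1 = #s := card_erase_add_one ha.1
  have hfa := card_filter_erase_self_add_one f ha.1
  have hsa := hs (f a)
  have hrest : ∀ c, 2 * #{x ∈ s.erase a | f x = c} ≤ #(s.erase a) + 1 := by
    intro c
    obtain rfl | hca := eq_or_ne c (f a)
    · omega
    rw [card_filter_erase_of_ne f s hca.symm]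
    obtain rfl | hcb := eq_or_ne c b
    · omega
    -- by maximality of `f a`, and disjointness of the two fibres
    have hle : #{x ∈ s | f x = c} ≤ #{x ∈ s | f x = f a} := by
      obtain ⟨x, hx⟩ | hempty := ({x ∈ s | f x = c} : Finset α).eq_empty_or_nonempty.symm
      · rw [mem_filter] at hx
        rw [← hx.2]
        exact hmax x (mem_filter.2 ⟨hx.1, hx.2 ▸ hcb⟩)
      · simp [hempty]
    have := card_filter_eq_add_card_filter_eq_le f s hca
    omega
  obtain ⟨l, hnd, hl, hchain, hhead⟩ :=
    ih (s.erase a) (erase_ssubset ha.1) (f a) hrest (by omega)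
  refine ⟨a :: l, List.nodup_cons.2 ⟨?_, hnd⟩, ?_, List.isChain_cons.2 ⟨?_, hchain⟩, ?_⟩
  · rw [← List.mem_toFinset, hl]
    exact notMem_erase a s
  · rw [List.toFinset_cons, hl, insert_erase ha.1]
  · exact fun y hy => (hhead y hy).symm
  · simpa using ha.2

theorem exists_equiv_fin_adjacent_ne [Fintype α] {n : ℕ} (hα : Fintype.card α = n)
    (hf : ∀ c, 2 * #{x | f x = c} ≤ n) :
    ∃ e : Fin n ≃ α, ∀ k l : Fin n, (l : ℕ) = k + 1 → f (e k) ≠ f (e l) := by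
  obtain ⟨l, hnd, hl, hchain⟩ :
      ∃ l : List α, l.Nodup ∧ l.toFinset = univ ∧ l.IsChain (fun x y => f x ≠ f y) := by
    cases isEmpty_or_nonempty α
    · exact ⟨[], by simp, by simp, .nil⟩
    have huniv : #(univ : Finset α) = n := by rw [card_univ, hα]
    obtain ⟨l, hnd, hl, hchain, -⟩ := exists_list_isChain_ne_of_head_ne f univ
      (f (Classical.arbitrary α)) (fun c => by have := hf c; omega) (huniv ▸ hf _)
    exact ⟨l, hnd, hl, hchain⟩
  have hlen : l.length = n := by
    rw [← hα, ← List.toFinset_card_of_nodup hnd, hl, card_univ]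
  refine ⟨(finCongr hlen.symm).trans
    (hnd.getEquivOfForallMemList l fun x => by simp [← List.mem_toFinset, hl]), ?_⟩
  rintro k ⟨m, hm⟩ (rfl : m = k + 1)
  simpa using hchain.getElem k (by omega)

end Arrangement

section Krylov

variable {K : Type*} [Field K] {n : ℕ} {T : Matrix (Fin n) (Fin n) K} {v : Fin n → K}

theorem hessenberg_pow_mulVec_apply (h0 : ∀ k l : Fin n, (l : ℕ) + 1 < k → T k l = 0)
    (h1 : ∀ k l : Fin n, (k : ℕ) = l + 1 → T k l ≠ 0)
    (hv0 : ∀ k : Fin n, 0 < (k : ℕ) → v k = 0)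
    (hv : ∀ k : Fin n, (k : ℕ) = 0 → v k ≠ 0)
    (m : ℕ) :
    (∀ k : Fin n, m < k → (T ^ m *ᵥ v) k = 0) ∧
      ∀ k : Fin n, (k : ℕ) = m → (T ^ m *ᵥ v) k ≠ 0 := by
  induction m with
  | zero => simpa using ⟨hv0, hv⟩
  | succ m ih =>
  have hterm : ∀ k l : Fin n, m < l ∨ (l : ℕ) + 1 < k → T k l * (T ^ m *ᵥ v) l = 0 := by
    rintro k l (hl | hl)
    · rw [ih.1 l hl, mul_zero]
    · rw [h0 k l hl, zero_mul]
  rw [pow_succ', ← mulVec_mulVec]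
  refine ⟨fun k hk =>
    Finset.sum_eq_zero (s := Finset.univ) fun l _ => hterm k l (by omega), fun k hk => ?_⟩
  change ∑ l, T k l * (T ^ m *ᵥ v) l ≠ 0
  have hm : m < n := by omega
  rw [Finset.sum_eq_single ⟨m, hm⟩ (fun l _ hl => hterm k l ?_) (by simp)]
  · exact mul_ne_zero (h1 k _ hk) (ih.2 _ rfl)
  · have : (l : ℕ) ≠ m := fun h => hl (Fin.ext h)
    omega

theorem linearIndependent_hessenberg_pow_mulVec
    (h0 : ∀ k l : Fin n, (l : ℕ) + 1 < k → T k l = 0)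
    (h1 : ∀ k l : Fin n, (k : ℕ) = l + 1 → T k l ≠ 0)
    (hv0 : ∀ k : Fin n, 0 < (k : ℕ) → v k = 0)
    (hv : ∀ k : Fin n, (k : ℕ) = 0 → v k ≠ 0) :
    LinearIndependent K (fun k : Fin n => T ^ (k : ℕ) *ᵥ v) := by
  have hK := hessenberg_pow_mulVec_apply h0 h1 hv0 hv
  let W : Matrix (Fin n) (Fin n) K := Matrix.of fun i k => (T ^ (k : ℕ) *ᵥ v) i
  have hW : W.IsUpperTriangular := fun i k hki => (hK k).1 i hki
  have hdet : W.det ≠ 0 := by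
    rw [det_of_isUpperTriangular hW]
    exact Finset.prod_ne_zero_iff.2 fun k _ => (hK k).2 k rfl
  exact linearIndependent_cols_of_det_ne_zero hdet

end Krylov

section Centralizer

variable {n : ℕ}

theorem mem_matCentC {A B : Matrix (Fin n) (Fin n) ℂ} : B ∈ matCentC n A ↔ A * B = B * A :=
  Iff.rfl

theorem pow_mem_matCentC (A : Matrix (Fin n) (Fin n) ℂ) (k : ℕ) : A ^ k ∈ matCentC n A :=
  (Commute.self_pow A k).eq

/-- `B ↦ B v` is injective on the centralizer, and the powers of `T` give `n` independent
elements of it. -/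
theorem finrank_matCentC_of_linearIndependent {T : Matrix (Fin n) (Fin n) ℂ} {v : Fin n → ℂ}
    (hv : LinearIndependent ℂ (fun k : Fin n => T ^ (k : ℕ) *ᵥ v)) :
    finrank ℂ (matCentC n T) = n := by
  let evalAt : matCentC n T →ₗ[ℂ] Fin n → ℂ :=
    LinearMap.applyₗ v ∘ₗ Matrix.toLin'.toLinearMap ∘ₗ (matCentC n T).subtype
  have hevalAt (B : matCentC n T) : evalAt B = (B : Matrix (Fin n) (Fin n) ℂ) *ᵥ v := rfl
  have hspan : Submodule.span ℂ (Set.range fun k : Fin n => T ^ (k : ℕ) *ᵥ v) = ⊤ :=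
    hv.span_eq_top_of_card_eq_finrank' (by simp)
  have hinj : Function.Injective evalAt := by
    rw [← LinearMap.ker_eq_bot, LinearMap.ker_eq_bot']
    rintro ⟨B, hB : Commute T B⟩ hBv
    rw [hevalAt] at hBv
    suffices Matrix.toLin' B = 0 from Subtype.ext (Matrix.toLin'.injective (by simpa using this))
    refine LinearMap.ext_on_range hspan fun k => ?_
    rw [toLin'_apply, mulVec_mulVec, ← (Commute.pow_left hB k).eq, ← mulVec_mulVec,
      hBv, mulVec_zero, LinearMap.zero_apply]
  refine le_antisymm ?_ ?_
  · simpa using LinearMap.finrank_le_finrank_of_injective hinj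
  · have hpow : LinearIndependent ℂ
        (fun k : Fin n => (⟨T ^ (k : ℕ), pow_mem_matCentC T k⟩ : matCentC n T)) :=
      hv.of_comp evalAt
    simpa using hpow.fintype_card_le_finrank

theorem matCentC_map_algEquiv
    (σ : Matrix (Fin n) (Fin n) ℂ ≃ₐ[ℂ] Matrix (Fin n) (Fin n) ℂ)
    (A : Matrix (Fin n) (Fin n) ℂ) :
    (matCentC n A).map σ.toLinearEquiv.toLinearMap = matCentC n (σ A) := by
  ext B
  rw [Submodule.mem_map_equiv, mem_matCentC, mem_matCentC, ← σ.injective.eq_iff, map_mul,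
    map_mul]
  simp

theorem finrank_matCentC_submatrix (A : Matrix (Fin n) (Fin n) ℂ) (e : Fin n ≃ Fin n) :
    finrank ℂ (matCentC n (A.submatrix e e)) = finrank ℂ (matCentC n A) := by
  have := matCentC_map_algEquiv (reindexAlgEquiv ℂ ℂ e.symm) A
  simp only [coe_reindexAlgEquiv, reindex_apply, Equiv.symm_symm] at this
  rw [← this, LinearEquiv.finrank_map_eq]

end Centralizer

/-- The skew-symmetric adjacency matrix of the path `0 — 1 — ⋯ — (n - 1)`. -/
def skewPathMatrix (n : ℕ) : Matrix (Fin n) (Fin n) ℂ :=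
  Matrix.of fun k l => if (l : ℕ) = k + 1 then 1 else if (k : ℕ) = l + 1 then -1 else 0

section skewPathMatrix

variable {n : ℕ}

theorem skewPathMatrix_apply (k l : Fin n) :
    skewPathMatrix n k l = if (l : ℕ) = k + 1 then 1 else if (k : ℕ) = l + 1 then -1 else 0 :=
  rfl

theorem skewPathMatrix_transpose : (skewPathMatrix n)ᵀ = -skewPathMatrix n := by
  ext k l
  rw [transpose_apply, neg_apply, skewPathMatrix_apply, skewPathMatrix_apply]
  split_ifs <;> first | omega | simp

theorem im_skewPathMatrix_apply (k l : Fin n) : (skewPathMatrix n k l).im = 0 := by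
  rw [skewPathMatrix_apply]
  split_ifs <;> simp

theorem adjacent_of_skewPathMatrix_apply_ne_zero {k l : Fin n} (h : skewPathMatrix n k l ≠ 0) :
    (l : ℕ) = k + 1 ∨ (k : ℕ) = l + 1 := by
  rw [skewPathMatrix_apply] at h
  split_ifs at h <;> simp_all

theorem finrank_matCentC_skewPathMatrix_add_diagonal (d : Fin n → ℂ) :
    finrank ℂ (matCentC n (skewPathMatrix n + diagonal d)) = n := by
  refine finrank_matCentC_of_linearIndependent
    (linearIndependent_hessenberg_pow_mulVec (v := fun k => if (k : ℕ) = 0 then 1 else 0)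
      (fun k l hkl => ?_) (fun k l hkl => ?_) (fun k hk => if_neg hk.ne')
      (fun k hk => by simp [hk]))
  · have : k ≠ l := fun h => by subst h; omega
    rw [Matrix.add_apply, skewPathMatrix_apply, diagonal_apply_ne _ this, if_neg (by omega),
      if_neg (by omega), add_zero]
  · have : k ≠ l := fun h => by subst h; omega
    rw [Matrix.add_apply, skewPathMatrix_apply, diagonal_apply_ne _ this, if_neg (by omega),
      if_pos hkl, add_zero]
    exact neg_ne_zero.2 one_ne_zero

end skewPathMatrix

theorem stmt12_general (n p : ℕ) (blk : Fin n → Fin p) (lam : Fin p → ℝ)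
    -- 2 n_j ≤ n for every j
    (hhalf : ∀ j : Fin p, 2 * (Finset.univ.filter (fun i => blk i = j)).card ≤ n)
    -- a = diag(iλ_1 I_{n_1}, …, iλ_p I_{n_p})
    (a : Matrix (Fin n) (Fin n) ℂ)
    (ha : a = Matrix.diagonal (fun i => Complex.I * (lam (blk i) : ℂ))) :
    ∃ x : Matrix (Fin n) (Fin n) ℂ,
      -- x is real, skew-symmetric, with vanishing diagonal blocks (i.e. x ∈ m̃)
      (∀ i j, (x i j).im = 0) ∧ xᵀ = -x ∧ (∀ i j, blk i = blk j → x i j = 0) ∧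
      -- and for every λ ∈ ℂ the centralizer of x + λa has dimension exactly n
      ∀ lam' : ℂ, finrank ℂ (matCentC n (x + lam' • a)) = n := by
  obtain ⟨e, he⟩ := exists_equiv_fin_adjacent_ne blk (Fintype.card_fin n) hhalf
  refine ⟨(skewPathMatrix n).submatrix e.symm e.symm, fun i j => im_skewPathMatrix_apply _ _,
    by rw [transpose_submatrix, skewPathMatrix_transpose]; rfl, fun i j hij => ?_,
    fun lam' => ?_⟩
  · by_contra hx
    rcases adjacent_of_skewPathMatrix_apply_ne_zero hx with h | h
    · exact he _ _ h (by simpa using hij)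
    · exact he _ _ h (by simpa using hij.symm)
  · have hconj : ((skewPathMatrix n).submatrix e.symm e.symm + lam' • a).submatrix e e =
        skewPathMatrix n + diagonal fun k => lam' * (Complex.I * lam (blk (e k))) := by
      rw [ha, ← diagonal_smul]
      ext k l
      simp [diagonal_apply]
    rw [← finrank_matCentC_submatrix _ e, hconj, finrank_matCentC_skewPathMatrix_add_diagonal]

theorem stmt12 (n p : ℕ) (blk : Fin n → Fin p) (lam : Fin p → ℝ)
    -- the eigenvalues λ_1, …, λ_p are pairwise distinct
    (hlam : Function.Injective lam)
    -- every block is nonempty (n_j ≥ 1)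
    (hblk : ∀ j : Fin p, 0 < (Finset.univ.filter (fun i => blk i = j)).card)
    -- 2 n_j ≤ n for every j
    (hhalf : ∀ j : Fin p, 2 * (Finset.univ.filter (fun i => blk i = j)).card ≤ n)
    -- a = diag(iλ_1 I_{n_1}, …, iλ_p I_{n_p})
    (a : Matrix (Fin n) (Fin n) ℂ)
    (ha : a = Matrix.diagonal (fun i => Complex.I * (lam (blk i) : ℂ))) :
    ∃ x : Matrix (Fin n) (Fin n) ℂ,
      -- x is real, skew-symmetric, with vanishing diagonal blocks (i.e. x ∈ m̃)
      (∀ i j, (x i j).im = 0) ∧ xᵀ = -x ∧ (∀ i j, blk i = blk j → x i j = 0) ∧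
      -- and for every λ ∈ ℂ the centralizer of x + λa has dimension exactly n
      ∀ lam' : ℂ, finrank ℂ (matCentC n (x + lam' • a)) = n :=
  stmt12_general n p blk lam hhalf a ha
end

section
/- Suppose p ≥ 3, 1 ≤ n_1 ≤ n_2 ≤ … ≤ n_p, and n_1 + … + n_{p−2} ≥ n_p − n_{p−1}. Then there exists a real skew-symmetric matrix x0 ∈ m̃ = m ∩ so(n) whose centralizer in k is exactly the one-dimensional center of u(n): {Z ∈ k : Z x0 = x0 Z} = {it·I_n : t ∈ ℝ}. -/
open Module Matrix


def Tmm (n : ℕ) : Matrix (Fin n) (Fin n) ℂ :=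
  Matrix.of fun a b => if (a:ℕ)+1 = (b:ℕ) then 1 else if (b:ℕ)+1 = (a:ℕ) then -1 else 0

lemma main_aux (n p : ℕ) (hn : 0 < n) (s : Fin n → Fin p)
    (P2 : ∀ d : ℕ, 1 ≤ d → d < n → ∃ a b : Fin n, (b:ℕ) = (a:ℕ) + d ∧ s a ≠ s b)
    (W : Matrix (Fin n) (Fin n) ℂ) (hH : Wᴴ = -W)
    (hblk : ∀ a b : Fin n, s a ≠ s b → W a b = 0)
    (hcomm : W * Tmm n = Tmm n * W) :
    ∃ t : ℝ, W = (Complex.I * (t:ℂ)) • 1 := by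
  classical
  set Wz : ℤ → ℤ → ℂ := fun a b =>
    if hab : 0 ≤ a ∧ a < (n:ℤ) ∧ 0 ≤ b ∧ b < (n:ℤ) then
      W ⟨a.toNat, by omega⟩ ⟨b.toNat, by omega⟩ else 0 with hWzdef
  have Wz_out : ∀ a b : ℤ, ¬(0 ≤ a ∧ a < (n:ℤ) ∧ 0 ≤ b ∧ b < (n:ℤ)) → Wz a b = 0 := by
    intro a b h; simp only [hWzdef]; rw [dif_neg h]
  have WzIn : ∀ a b : Fin n, Wz (a:ℤ) (b:ℤ) = W a b := by
    intro a b
    have h1 := a.isLt; have h2 := b.isLt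
    simp only [hWzdef]
    rw [dif_pos (by refine ⟨by omega, by omega, by omega, by omega⟩)]
    congr 1 <;> exact Fin.ext (by simp)
  have WzRow : ∀ (a : Fin n) (t : ℤ), Wz (a:ℤ) t =
      if h : 0 ≤ t ∧ t < (n:ℤ) then W a ⟨t.toNat, by omega⟩ else 0 := by
    intro a t
    have h1 := a.isLt
    split
    · next h =>
      simp only [hWzdef]
      rw [dif_pos (by refine ⟨by omega, by omega, h.1, h.2⟩)]
      congr 1 <;> exact Fin.ext (by simp)
    · next h => exact Wz_out _ _ (by omega)
  have WzCol : ∀ (b : Fin n) (t : ℤ), Wz t (b:ℤ) =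
      if h : 0 ≤ t ∧ t < (n:ℤ) then W ⟨t.toNat, by omega⟩ b else 0 := by
    intro b t
    have h1 := b.isLt
    split
    · next h =>
      simp only [hWzdef]
      rw [dif_pos (by refine ⟨h.1, h.2, by omega, by omega⟩)]
      congr 1 <;> exact Fin.ext (by simp)
    · next h => exact Wz_out _ _ (by omega)
  have sum_left : ∀ (f : Fin n → ℂ) (t : ℤ),
      (∑ c : Fin n, if (c:ℤ) = t then f c else 0)
        = if h : 0 ≤ t ∧ t < (n:ℤ) then f ⟨t.toNat, by omega⟩ else 0 := by
    intro f t
    split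
    · next h =>
      rw [Finset.sum_eq_single (⟨t.toNat, by omega⟩ : Fin n)]
      · rw [if_pos (by show ((t.toNat:ℕ):ℤ) = t; simp [Int.toNat_of_nonneg h.1])]
      · intro c _ hc
        have : ¬((c:ℤ) = t) := fun hct => hc (Fin.ext (show (c:ℕ) = t.toNat by omega))
        rw [if_neg this]
      · intro hmem; exact absurd (Finset.mem_univ _) hmem
    · next h =>
      apply Finset.sum_eq_zero
      intro c _
      have hcl := c.isLt
      have : ¬((c:ℤ) = t) := fun hct => h ⟨by omega, by omega⟩
      rw [if_neg this]
  have E'' : ∀ a b : Fin n, Wz (a:ℤ) ((b:ℤ)-1) - Wz (a:ℤ) ((b:ℤ)+1)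
      = Wz ((a:ℤ)+1) (b:ℤ) - Wz ((a:ℤ)-1) (b:ℤ) := by
    intro a b
    have key := congrFun (congrFun hcomm a) b
    have hL : (W * Tmm n) a b = Wz (a:ℤ) ((b:ℤ)-1) - Wz (a:ℤ) ((b:ℤ)+1) := by
      rw [Matrix.mul_apply]
      have hterm : ∀ c : Fin n, W a c * Tmm n c b
          = ((if (c:ℤ) = (b:ℤ) - 1 then W a c else 0)
              - (if (c:ℤ) = (b:ℤ) + 1 then W a c else 0)) := by
        intro c
        have h1 := c.isLt; have h2 := b.isLt
        simp only [Tmm, Matrix.of_apply]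
        split_ifs <;> (try (exfalso; omega)) <;> ring
      rw [Finset.sum_congr rfl (fun c _ => hterm c), Finset.sum_sub_distrib,
        sum_left, sum_left, WzRow, WzRow]
    have hR : (Tmm n * W) a b = Wz ((a:ℤ)+1) (b:ℤ) - Wz ((a:ℤ)-1) (b:ℤ) := by
      rw [Matrix.mul_apply]
      have hterm : ∀ c : Fin n, Tmm n a c * W c b
          = ((if (c:ℤ) = (a:ℤ) + 1 then W c b else 0)
              - (if (c:ℤ) = (a:ℤ) - 1 then W c b else 0)) := by
        intro c
        have h1 := c.isLt; have h2 := a.isLt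
        simp only [Tmm, Matrix.of_apply]
        split_ifs <;> (try (exfalso; omega)) <;> ring
      rw [Finset.sum_congr rfl (fun c _ => hterm c), Finset.sum_sub_distrib,
        sum_left, sum_left, WzCol, WzCol]
    rw [← hL, ← hR, key]
  have E' : ∀ a b : ℤ, 0 ≤ a → a < (n:ℤ) → 0 ≤ b → b < (n:ℤ) →
      Wz a (b-1) - Wz a (b+1) = Wz (a+1) b - Wz (a-1) b := by
    intro a b ha ha' hb hb'
    have hE := E'' ⟨a.toNat, by omega⟩ ⟨b.toNat, by omega⟩
    rw [show ((⟨a.toNat, by omega⟩ : Fin n):ℤ) = a from by simp [Int.toNat_of_nonneg ha]] at hE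
    rw [show ((⟨b.toNat, by omega⟩ : Fin n):ℤ) = b from by simp [Int.toNat_of_nonneg hb]] at hE
    exact hE

  have upper : ∀ t : ℕ, ∀ a b : ℤ, 0 ≤ a → a < b → (n:ℤ) ≤ b - a + t → Wz a b = 0 := by
    intro t
    induction t with
    | zero =>
      intro a b ha hab hd
      exact Wz_out _ _ (by omega)
    | succ t ih =>
      intro a b ha hab hd
      by_cases hb : b < (n:ℤ)
      · set d : ℤ := b - a with hddef
        have hd1 : 1 ≤ d := by omega
        have step : ∀ a' : ℤ, 0 ≤ a' → a' + d + 1 < (n:ℤ) →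
            Wz a' (a' + d) = Wz (a' + 1) (a' + 1 + d) := by
          intro a' h1 h2
          have hE := E' a' (a' + d + 1) h1 (by omega) (by omega) h2
          have e1 : a' + d + 1 - 1 = a' + d := by ring
          have e2 : a' + d + 1 + 1 = a' + d + 2 := by ring
          rw [e1, e2] at hE
          have z1 : Wz a' (a' + d + 2) = 0 := ih a' _ h1 (by omega) (by omega)
          have z2 : Wz (a' - 1) (a' + d + 1) = 0 := by
            by_cases h3 : 0 ≤ a' - 1
            · exact ih _ _ h3 (by omega) (by omega)
            · exact Wz_out _ _ (by omega)
          have e3 : a' + 1 + d = a' + d + 1 := by ring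
          rw [z1, z2] at hE
          rw [e3]
          linear_combination hE
        have chain : ∀ k : ℕ, (k:ℤ) + d < (n:ℤ) → Wz (k:ℤ) ((k:ℤ) + d) = Wz 0 d := by
          intro k
          induction k with
          | zero => intro _; norm_num
          | succ k ih2 =>
            intro hk
            have hk' : (k:ℤ) + 1 + d < (n:ℤ) := by push_cast at hk; omega
            have hstep := step (k:ℤ) (by omega) (by omega)
            push_cast
            rw [← hstep]
            exact ih2 (by omega)
        obtain ⟨a0, b0, hb0, hsneq⟩ := P2 d.toNat (by omega) (by omega)
        have w0 : Wz (a0:ℤ) (b0:ℤ) = 0 := by rw [WzIn]; exact hblk _ _ hsneq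
        have hb0z : (b0:ℤ) = (a0:ℤ) + d := by omega
        have h1 : Wz a b = Wz 0 d := by
          have hc := chain a.toNat (by omega)
          rw [Int.toNat_of_nonneg ha] at hc
          rw [show b = a + d from by omega]
          exact hc
        have h2 : Wz (a0:ℤ) ((a0:ℤ) + d) = Wz 0 d := chain (a0:ℕ) (by have := b0.isLt; omega)
        rw [h1, ← h2, ← hb0z]
        exact w0
      · exact Wz_out _ _ (by omega)
  have upperW : ∀ i j : Fin n, (i:ℕ) < (j:ℕ) → W i j = 0 := by
    intro i j hij
    have hu := upper n (i:ℤ) (j:ℤ) (by omega) (by omega) (by have := j.isLt; omega)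
    rwa [WzIn] at hu
  have lowerW : ∀ i j : Fin n, (j:ℕ) < (i:ℕ) → W i j = 0 := by
    intro i j hij
    have h1 : Wᴴ j i = (-W) j i := by rw [hH]
    rw [Matrix.conjTranspose_apply, Matrix.neg_apply, upperW j i hij, neg_zero] at h1
    exact star_eq_zero.mp h1
  have diagW : ∀ k : ℕ, (hk : k < n) → W ⟨k, hk⟩ ⟨k, hk⟩ = W ⟨0, hn⟩ ⟨0, hn⟩ := by
    intro k
    induction k with
    | zero => intro hk; rfl
    | succ k ih =>
      intro hk
      have hE := E' (k:ℤ) ((k:ℤ)+1) (by omega) (by omega) (by omega) (by omega)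
      have z1 : Wz (k:ℤ) ((k:ℤ)+1+1) = 0 := upper n _ _ (by omega) (by omega) (by omega)
      have z2 : Wz ((k:ℤ)-1) ((k:ℤ)+1) = 0 := by
        by_cases h3 : 0 ≤ (k:ℤ) - 1
        · exact upper n _ _ h3 (by omega) (by omega)
        · exact Wz_out _ _ (by omega)
      have e1 : (k:ℤ) + 1 - 1 = (k:ℤ) := by ring
      rw [e1, z1, z2] at hE
      have hWk : Wz (k:ℤ) (k:ℤ) = W ⟨k, by omega⟩ ⟨k, by omega⟩ := by
        have hq := WzIn ⟨k, by omega⟩ ⟨k, by omega⟩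
        simpa using hq
      have hWk1 : Wz ((k:ℤ)+1) ((k:ℤ)+1) = W ⟨k+1, hk⟩ ⟨k+1, hk⟩ := by
        have hq := WzIn ⟨k+1, hk⟩ ⟨k+1, hk⟩
        push_cast at hq
        simpa using hq
      have hstep : W ⟨k+1, hk⟩ ⟨k+1, hk⟩ = W ⟨k, by omega⟩ ⟨k, by omega⟩ := by
        rw [← hWk1, ← hWk]
        linear_combination -hE
      rw [hstep]
      exact ih (by omega)
  refine ⟨(W ⟨0,hn⟩ ⟨0,hn⟩).im, ?_⟩
  have h00 : W ⟨0,hn⟩ ⟨0,hn⟩ = Complex.I * ((W ⟨0,hn⟩ ⟨0,hn⟩).im : ℂ) := by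
    have h1 : Wᴴ ⟨0,hn⟩ ⟨0,hn⟩ = (-W) ⟨0,hn⟩ ⟨0,hn⟩ := by rw [hH]
    rw [Matrix.conjTranspose_apply, Matrix.neg_apply] at h1
    have hre : (W ⟨0,hn⟩ ⟨0,hn⟩).re = 0 := by
      have h2 := congrArg Complex.re h1
      simp [Complex.star_def] at h2
      linarith
    apply Complex.ext <;> simp [Complex.mul_re, Complex.mul_im, hre]
  ext i j
  rw [Matrix.smul_apply, Matrix.one_apply]
  by_cases hij : i = j
  · subst hij
    rw [if_pos rfl, smul_eq_mul, mul_one]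
    have hd : W i i = W ⟨0,hn⟩ ⟨0,hn⟩ := by
      have hq := diagW (i:ℕ) i.isLt
      simpa using hq
    rw [hd, ← h00]
  · rw [if_neg hij, smul_eq_mul, mul_zero]
    rcases Nat.lt_or_ge (i:ℕ) (j:ℕ) with h | h
    · exact upperW i j h
    · have hlt : (j:ℕ) < (i:ℕ) := by
        rcases Nat.lt_or_ge (j:ℕ) (i:ℕ) with h2 | h2
        · exact h2
        · exact absurd (Fin.ext (by omega)) hij
      exact lowerW i j hlt


set_option maxHeartbeats 2000000 in
lemma comb (n p : ℕ) (hp : 3 ≤ p) (hn : 0 < n) (blk : Fin n → Fin p)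
    (N : Fin p → ℕ)
    (hN : ∀ j : Fin p, N j = (Finset.univ.filter (fun i => blk i = j)).card)
    (F1 : ∀ j : Fin p, 2 * N j ≤ n)
    (F2 : ∀ j : Fin p, 2 * N j = n → (j:ℕ) = p - 1) :
    ∃ v : Equiv.Perm (Fin n),
      (∀ a b : Fin n, (b:ℕ) = (a:ℕ) + 1 → blk (v a) ≠ blk (v b)) ∧
      (∀ d : ℕ, 1 ≤ d → d < n → ∃ a b : Fin n, (b:ℕ) = (a:ℕ) + d ∧ blk (v a) ≠ blk (v b)) := by
  classical
  set e := Tuple.sort blk with hedef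
  set ℓ : Fin n → Fin p := fun k => blk (e k) with hldef
  have mono : Monotone ℓ := Tuple.monotone_sort blk
  have hcnt : ∀ x : Fin n, (Finset.univ.filter fun k => ℓ k = ℓ x).card = N (ℓ x) := by
    intro x
    rw [hN]
    apply Finset.card_bij (fun k _ => e k)
    · intro k hk
      simp only [Finset.mem_filter] at *
      exact ⟨Finset.mem_univ _, hk.2⟩
    · intro k1 h1 k2 h2 hek
      exact e.injective hek
    · intro i hi
      refine ⟨e.symm i, ?_, by simp⟩
      simp only [Finset.mem_filter] at *
      refine ⟨Finset.mem_univ _, ?_⟩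
      show blk (e (e.symm i)) = ℓ x
      rw [Equiv.apply_symm_apply]
      exact hi.2
  set h : ℕ := (n+1)/2 with hhdef
  have K : ∀ a b : Fin n, (a:ℕ) ≤ (b:ℕ) → ℓ a = ℓ b →
      ((b:ℕ) - (a:ℕ) + 1 ≤ h ∧ ((b:ℕ) - (a:ℕ) + 1 = h → h ≤ (a:ℕ))) := by
    intro a b hab heq
    have hconst : ∀ x : Fin n, a ≤ x → x ≤ b → ℓ x = ℓ a :=
      fun x h1 h2 => le_antisymm (heq ▸ mono h2) (mono h1)
    have hsub : Finset.Icc a b ⊆ Finset.univ.filter fun k => ℓ k = ℓ a := by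
      intro x hx
      rw [Finset.mem_Icc] at hx
      simp only [Finset.mem_filter]
      exact ⟨Finset.mem_univ _, hconst x hx.1 hx.2⟩
    have hcard : (b:ℕ) - (a:ℕ) + 1 ≤ N (ℓ a) := by
      have h1 := Finset.card_le_card hsub
      rw [Fin.card_Icc, hcnt a] at h1
      omega
    have hF1 := F1 (ℓ a)
    refine ⟨by omega, ?_⟩
    intro htight
    have h2N : 2 * N (ℓ a) = n := by omega
    have hval := F2 _ h2N
    have hle : ∀ w : Fin p, w ≤ ℓ a := by
      intro w
      rw [Fin.le_def]
      have := w.isLt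
      omega
    have hsub2 : Finset.Icc a ⟨n-1, by omega⟩ ⊆ Finset.univ.filter fun k => ℓ k = ℓ a := by
      intro x hx
      rw [Finset.mem_Icc] at hx
      simp only [Finset.mem_filter]
      exact ⟨Finset.mem_univ _, le_antisymm (hle _) (mono hx.1)⟩
    have h3 := Finset.card_le_card hsub2
    rw [Fin.card_Icc, hcnt a] at h3
    have h3' : (n - 1) + 1 - (a:ℕ) ≤ N (ℓ a) := h3
    omega
  have hrb : ∀ i : Fin n, (if (i:ℕ) % 2 = 0 then (i:ℕ)/2 else h + (i:ℕ)/2) < n := by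
    intro i
    have := i.isLt
    split <;> omega
  set ρ : Fin n → Fin n :=
    fun i => ⟨if (i:ℕ) % 2 = 0 then (i:ℕ)/2 else h + (i:ℕ)/2, hrb i⟩ with hrdef
  have hrval : ∀ i : Fin n, ((ρ i):ℕ) = if (i:ℕ) % 2 = 0 then (i:ℕ)/2 else h + (i:ℕ)/2 :=
    fun i => rfl
  have hinj : Function.Injective ρ := by
    intro i j hij
    have h1 := i.isLt
    have h2 := j.isLt
    have hv := congrArg Fin.val hij
    rw [hrval, hrval] at hv
    apply Fin.ext
    split_ifs at hv <;> omega
  have hbij : Function.Bijective ρ := Finite.injective_iff_bijective.mp hinj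
  set v : Equiv.Perm (Fin n) := (Equiv.ofBijective ρ hbij).trans e with hvdef
  have hsv : ∀ i : Fin n, blk (v i) = ℓ (ρ i) := fun i => rfl
  clear_value v ρ ℓ e h
  refine ⟨v, ?_, ?_⟩
  · -- P1
    intro a b hba heq'
    have ha := a.isLt
    have hb := b.isLt
    have heq2 : ℓ (ρ a) = ℓ (ρ b) := by rw [← hsv, ← hsv]; exact heq'
    have hva := hrval a
    have hvb := hrval b
    by_cases hpar : (a:ℕ) % 2 = 0
    · have h1 : ((ρ a):ℕ) ≤ ((ρ b):ℕ) := by rw [hva, hvb]; split_ifs <;> omega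
      have hK := K (ρ a) (ρ b) h1 heq2
      rw [hva, hvb] at hK
      split_ifs at hK <;> omega
    · have h1 : ((ρ b):ℕ) ≤ ((ρ a):ℕ) := by rw [hva, hvb]; split_ifs <;> omega
      have hK := K (ρ b) (ρ a) h1 heq2.symm
      rw [hva, hvb] at hK
      split_ifs at hK <;> omega
  · -- P2
    intro d hd1 hdn
    by_cases hpar : d % 2 = 0
    · by_contra hcon
      push_neg at hcon
      have per : ∀ k : ℕ, (hk : k + d/2 ≤ h - 1) →
          ℓ ⟨k, by omega⟩ = ℓ ⟨k + d/2, by omega⟩ := by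
        intro k hk
        have h2k : 2*k < n := by omega
        have h2kd : 2*k + d < n := by omega
        have hc := hcon ⟨2*k, h2k⟩ ⟨2*k + d, h2kd⟩ (by show 2*k + d = 2*k + d; rfl)
        rw [hsv, hsv] at hc
        have hρ1 : ρ ⟨2*k, h2k⟩ = ⟨k, by omega⟩ := by
          apply Fin.ext
          rw [hrval]
          show (if (2*k) % 2 = 0 then (2*k)/2 else h + (2*k)/2) = k
          rw [if_pos (by omega)]
          omega
        have hρ2 : ρ ⟨2*k + d, h2kd⟩ = ⟨k + d/2, by omega⟩ := by
          apply Fin.ext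
          rw [hrval]
          show (if (2*k + d) % 2 = 0 then (2*k + d)/2 else h + (2*k + d)/2) = k + d/2
          rw [if_pos (by omega)]
          omega
        rw [hρ1, hρ2] at hc
        exact hc
      have hstep0 : ℓ ⟨0, hn⟩ = ℓ ⟨d/2, by omega⟩ := by
        have h0 := per 0 (by omega)
        have hmk : (⟨0 + d/2, by omega⟩ : Fin n) = ⟨d/2, by omega⟩ :=
          Fin.ext (by show 0 + d/2 = d/2; omega)
        rw [hmk] at h0
        exact h0
      have hall : ∀ j : ℕ, (hj : j ≤ h - 1) → ℓ ⟨j, by omega⟩ = ℓ ⟨0, hn⟩ := by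
        intro j
        induction j using Nat.strong_induction_on with
        | _ j ih =>
          intro hj
          by_cases hje : d/2 ≤ j
          · have hprev := per (j - d/2) (by omega)
            have hmk : (⟨j - d/2 + d/2, by omega⟩ : Fin n) = ⟨j, by omega⟩ :=
              Fin.ext (by show (j - d/2 + d/2) = j; omega)
            rw [hmk] at hprev
            rw [← hprev]
            exact ih (j - d/2) (by omega) (by omega)
          · have hle1 : ℓ ⟨0, hn⟩ ≤ ℓ ⟨j, by omega⟩ := mono (by rw [Fin.le_def]; show 0 ≤ j; omega)
            have hle2 : ℓ ⟨j, by omega⟩ ≤ ℓ ⟨d/2, by omega⟩ :=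
              mono (by rw [Fin.le_def]; show j ≤ d/2; omega)
            exact le_antisymm (le_trans hle2 (le_of_eq hstep0.symm)) hle1
      have hfin := hall (h-1) le_rfl
      have hK := K ⟨0, hn⟩ ⟨h-1, by omega⟩ (by show 0 ≤ h-1; omega) hfin.symm
      have hK' : (h-1) - 0 + 1 ≤ h ∧ ((h-1) - 0 + 1 = h → h ≤ 0) := hK
      omega
    · refine ⟨⟨0, hn⟩, ⟨d, by omega⟩, by show d = 0 + d; omega, ?_⟩
      intro heq'
      have heq2 : ℓ (ρ ⟨0, hn⟩) = ℓ (ρ ⟨d, by omega⟩) := by rw [← hsv, ← hsv]; exact heq'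
      have hρ0 : ρ ⟨0, hn⟩ = ⟨0, hn⟩ := by
        apply Fin.ext
        rw [hrval]
        show (if 0 % 2 = 0 then 0/2 else h + 0/2) = 0
        norm_num
      have hbd : h + d/2 < n := by omega
      have hρd : ρ ⟨d, by omega⟩ = ⟨h + d/2, hbd⟩ := by
        apply Fin.ext
        rw [hrval]
        show (if d % 2 = 0 then d/2 else h + d/2) = h + d/2
        rw [if_neg (by omega)]
      rw [hρ0, hρd] at heq2
      have hK := K ⟨0, hn⟩ ⟨h + d/2, hbd⟩ (by show 0 ≤ h + d/2; omega) heq2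
      have hK' : (h + d/2) - 0 + 1 ≤ h := hK.1
      omega

set_option maxHeartbeats 1000000 in
theorem stmt13 (n p : ℕ) (hp : 3 ≤ p) (blk : Fin n → Fin p) (lam : Fin p → ℝ)
    -- the eigenvalues λ_1, …, λ_p are pairwise distinct
    (hlam : Function.Injective lam)
    -- the block sizes n_j
    (N : Fin p → ℕ)
    (hN : ∀ j : Fin p, N j = (Finset.univ.filter (fun i => blk i = j)).card)
    (hpos : ∀ j : Fin p, 1 ≤ N j)
    (hmono : ∀ j1 j2 : Fin p, j1 ≤ j2 → N j1 ≤ N j2)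
    -- n_1 + … + n_{p-2} ≥ n_p − n_{p-1}
    (hsum : N ⟨p - 1, by omega⟩ - N ⟨p - 2, by omega⟩ ≤
      ∑ j ∈ Finset.univ.filter (fun j : Fin p => (j : ℕ) < p - 2), N j)
    -- a = diag(iλ_1 I_{n_1}, …, iλ_p I_{n_p})
    (a : Matrix (Fin n) (Fin n) ℂ)
    (ha : a = Matrix.diagonal (fun i => Complex.I * (lam (blk i) : ℂ))) :
    ∃ x0 : Matrix (Fin n) (Fin n) ℂ,
      -- x0 is real, skew-symmetric, with vanishing diagonal blocks (i.e. x0 ∈ m̃)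
      (∀ i j, (x0 i j).im = 0) ∧ x0ᵀ = -x0 ∧ (∀ i j, blk i = blk j → x0 i j = 0) ∧
      -- the centralizer of x0 in k is exactly the center {it·I_n : t ∈ ℝ} of u(n)
      {Z : Matrix (Fin n) (Fin n) ℂ |
          Zᴴ = -Z ∧ (∀ i j, blk i ≠ blk j → Z i j = 0) ∧ Z * x0 = x0 * Z}
        = {Z : Matrix (Fin n) (Fin n) ℂ |
            ∃ t : ℝ, Z = (Complex.I * (t : ℂ)) • (1 : Matrix (Fin n) (Fin n) ℂ)} := by
  classical
  have sumN : ∑ j, N j = n := by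
    have h1 : ∑ j, N j = ∑ j, (Finset.univ.filter (fun i => blk i = j)).card :=
      Finset.sum_congr rfl fun j _ => hN j
    rw [h1, ← Finset.card_eq_sum_card_fiberwise
      (fun x (_ : x ∈ Finset.univ) => Finset.mem_univ (blk x))]
    simp
  have hpn : p ≤ n := by
    have h2 : ∑ _j : Fin p, 1 ≤ ∑ j, N j := Finset.sum_le_sum fun j _ => hpos j
    simp only [Finset.sum_const, Finset.card_univ, Fintype.card_fin, smul_eq_mul, mul_one] at h2
    omega
  have hn : 0 < n := by omega
  have hsplit : (∑ j ∈ Finset.univ.filter (fun j : Fin p => (j:ℕ) < p - 2), N j)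
      + N ⟨p-2, by omega⟩ + N ⟨p-1, by omega⟩ = n := by
    have hset : Finset.univ.filter (fun j : Fin p => ¬ ((j:ℕ) < p - 2)) =
        {(⟨p-2, by omega⟩ : Fin p), ⟨p-1, by omega⟩} := by
      ext j
      simp only [Finset.mem_filter, Finset.mem_univ, true_and, Finset.mem_insert,
        Finset.mem_singleton, Fin.ext_iff]
      have := j.isLt
      omega
    have htot := Finset.sum_filter_add_sum_filter_not Finset.univ
      (fun j : Fin p => (j:ℕ) < p - 2) N
    rw [hset, Finset.sum_insert (by simp only [Finset.mem_singleton, Fin.ext_iff]; omega),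
      Finset.sum_singleton, sumN] at htot
    omega
  have hmax : ∀ j : Fin p, N j ≤ N ⟨p-1, by omega⟩ := fun j =>
    hmono j ⟨p-1, by omega⟩ (by rw [Fin.le_def]; show (j:ℕ) ≤ p-1; have := j.isLt; omega)
  have F1 : ∀ j : Fin p, 2 * N j ≤ n := by
    intro j
    have h1 := hmax j
    have h3 := hsum
    omega
  have hS1 : 1 ≤ ∑ j ∈ Finset.univ.filter (fun j : Fin p => (j:ℕ) < p - 2), N j := by
    have hmem : (⟨0, by omega⟩ : Fin p) ∈ Finset.univ.filter (fun j : Fin p => (j:ℕ) < p - 2) := by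
      simp only [Finset.mem_filter, Finset.mem_univ, true_and]
      show (0:ℕ) < p - 2
      omega
    calc 1 ≤ N ⟨0, by omega⟩ := hpos _
    _ ≤ ∑ j ∈ Finset.univ.filter (fun j : Fin p => (j:ℕ) < p - 2), N j :=
      Finset.single_le_sum (fun i _ => Nat.zero_le _) hmem
  have F2 : ∀ j : Fin p, 2 * N j = n → (j:ℕ) = p - 1 := by
    intro j h2N
    by_contra hne
    have hj := j.isLt
    have hjle : N j ≤ N ⟨p-2, by omega⟩ :=
      hmono j ⟨p-2, by omega⟩ (by rw [Fin.le_def]; show (j:ℕ) ≤ p-2; omega)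
    have hm2 : N ⟨p-2, by omega⟩ ≤ N ⟨p-1, by omega⟩ :=
      hmono ⟨p-2, by omega⟩ ⟨p-1, by omega⟩ (by rw [Fin.le_def]; show p-2 ≤ p-1; omega)
    omega
  obtain ⟨v, P1, P2⟩ := comb n p hp hn blk N hN F1 F2
  refine ⟨(Tmm n).submatrix ⇑v.symm ⇑v.symm, ?_, ?_, ?_, ?_⟩
  · intro i j
    simp only [Matrix.submatrix_apply, Tmm, Matrix.of_apply]
    split_ifs <;> simp
  · ext i j
    simp only [Matrix.transpose_apply, Matrix.neg_apply, Matrix.submatrix_apply, Tmm,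
      Matrix.of_apply]
    split_ifs <;> (try norm_num) <;> (exfalso; omega)
  · intro i j hbij
    simp only [Matrix.submatrix_apply, Tmm, Matrix.of_apply]
    split_ifs with h1 h2
    · exfalso
      have hP := P1 (v.symm i) (v.symm j) h1.symm
      rw [Equiv.apply_symm_apply, Equiv.apply_symm_apply] at hP
      exact hP hbij
    · exfalso
      have hP := P1 (v.symm j) (v.symm i) h2.symm
      rw [Equiv.apply_symm_apply, Equiv.apply_symm_apply] at hP
      exact hP hbij.symm
    · rfl
  · ext Z
    simp only [Set.mem_setOf_eq]
    constructor
    · rintro ⟨hZH, hZblk, hZcomm⟩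
      set W : Matrix (Fin n) (Fin n) ℂ := Z.submatrix ⇑v ⇑v with hWdef
      have hH : Wᴴ = -W := by
        ext a b
        have h1 := congrFun (congrFun hZH (v a)) (v b)
        simp only [Matrix.conjTranspose_apply, Matrix.neg_apply] at h1
        simp only [hWdef, Matrix.conjTranspose_apply, Matrix.neg_apply, Matrix.submatrix_apply]
        exact h1
      have hTm : Tmm n = ((Tmm n).submatrix ⇑v.symm ⇑v.symm).submatrix ⇑v ⇑v := by
        ext a b
        simp [Matrix.submatrix_apply]
      have hcm : W * Tmm n = Tmm n * W := by
        have h1 : W * Tmm n = (Z * (Tmm n).submatrix ⇑v.symm ⇑v.symm).submatrix ⇑v ⇑v := by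
          conv_lhs => rw [hTm, hWdef]
          rw [Matrix.submatrix_mul_equiv Z ((Tmm n).submatrix ⇑v.symm ⇑v.symm) ⇑v v ⇑v]
        have h2 : Tmm n * W = ((Tmm n).submatrix ⇑v.symm ⇑v.symm * Z).submatrix ⇑v ⇑v := by
          conv_lhs => rw [hTm, hWdef]
          rw [Matrix.submatrix_mul_equiv ((Tmm n).submatrix ⇑v.symm ⇑v.symm) Z ⇑v v ⇑v]
        rw [h1, h2, hZcomm]
      obtain ⟨t, hW⟩ := main_aux n p hn (fun i => blk (v i)) P2 W hH
        (fun a b hs => hZblk _ _ hs) hcm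
      refine ⟨t, ?_⟩
      have hZW : Z = W.submatrix ⇑v.symm ⇑v.symm := by
        rw [hWdef]
        ext i j
        simp [Matrix.submatrix_apply]
      rw [hZW, hW]
      ext i j
      simp [Matrix.submatrix_apply, Matrix.smul_apply, Matrix.one_apply,
        EmbeddingLike.apply_eq_iff_eq]
    · rintro ⟨t, rfl⟩
      refine ⟨?_, ?_, ?_⟩
      · rw [Matrix.conjTranspose_smul, Matrix.conjTranspose_one, ← neg_smul]
        congr 1
        simp [Complex.ext_iff]
      · intro i j hne
        have hij : i ≠ j := fun hq => hne (by rw [hq])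
        simp [Matrix.smul_apply, Matrix.one_apply_ne hij]
      · rw [Matrix.smul_mul, Matrix.mul_smul, Matrix.one_mul, Matrix.mul_one]
end

section
/- Suppose k = g^a for some a ∈ g and x0 ∈ R(m). Let g0 = {z ∈ g : [z,β] = 0 for all β ∈ k^{x0}} be the centralizer of k^{x0} in g. Then a ∈ g0, x0 ∈ g0, and g^{x0} decomposes as the direct sum of subspaces g^{x0} = (g^{x0} ∩ g0) ⊕ ⁅k^{x0}, k^{x0}⁆, where g^{x0} ∩ g0 equals the center z(g^{x0}) of g^{x0}. -/
/-!
Since `B` is invariant and positive definite, every `ad z` is skew, and for a subalgebra `c` the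
centre `z(c)` is the `B`-orthogonal complement of `⁅c, c⁆` inside `c`; hence
`c = z(c) ⊕ ⁅c, c⁆`. For `c = g^{x0}`, fact (2.5) gives `⁅c, c⁆ = ⁅k^{x0}, k^{x0}⁆`, so an element
of `c` commuting with `k^{x0}` is orthogonal to `⁅c, c⁆` and therefore central in `c`: this
identifies `g^{x0} ∩ g0` with `z(g^{x0})`, and `a, x0 ∈ g0` because `k^{x0} ⊆ g^a ∩ g^{x0}`.
-/

open Module

/-- The centralizer of `x` in a real Lie algebra, as a submodule. -/
def cent (g : Type*) [LieRing g] [LieAlgebra ℝ g] (x : g) : Submodule ℝ g where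
  carrier := {z : g | ⁅x, z⁆ = 0}
  add_mem' := by
    intro u v hu hv
    simp only [Set.mem_setOf_eq] at *
    simp [lie_add, hu, hv]
  zero_mem' := by simp
  smul_mem' := by
    intro c z hz
    simp only [Set.mem_setOf_eq] at *
    simp [lie_smul, hz]

lemma LinearMap.BilinForm.disjoint_orthogonal_of_anisotropic {R M : Type*} [CommRing R]
    [AddCommGroup M] [Module R M] {Φ : LinearMap.BilinForm R M}
    (hΦ : Φ.toQuadraticMap.Anisotropic) (W : Submodule R M) : Disjoint W (Φ.orthogonal W) :=
  Submodule.disjoint_def.2 fun x hx hx' => hΦ x (hx' x hx)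

namespace Submodule

section CommRing

variable {R L : Type*} [CommRing R] [LieRing L] [LieAlgebra R L]

def bracketSpan (U : Submodule R L) : Submodule R L :=
  span R {w | ∃ u ∈ U, ∃ v ∈ U, w = ⁅u, v⁆}

def lieCentralizer (U : Submodule R L) : Submodule R L where
  carrier := {z | ∀ β ∈ U, ⁅z, β⁆ = 0}
  add_mem' hz hw β hβ := by rw [add_lie, hz β hβ, hw β hβ, add_zero]
  zero_mem' _ _ := zero_lie _
  smul_mem' c _ hz β hβ := by rw [smul_lie, hz β hβ, smul_zero]

variable {U c : Submodule R L} {Φ : LinearMap.BilinForm R L}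

lemma lie_mem_bracketSpan {u v : L} (hu : u ∈ U) (hv : v ∈ U) : ⁅u, v⁆ ∈ U.bracketSpan :=
  subset_span ⟨u, hu, v, hv, rfl⟩

lemma bracketSpan_le {W : Submodule R L} (h : ∀ u ∈ U, ∀ v ∈ U, ⁅u, v⁆ ∈ W) :
    U.bracketSpan ≤ W :=
  span_le.2 <| by rintro _ ⟨u, hu, v, hv, rfl⟩; exact h u hu v hv

lemma lieCentralizer_anti {V : Submodule R L} (h : U ≤ V) :
    V.lieCentralizer ≤ U.lieCentralizer :=
  fun _ hz β hβ => hz β (h hβ)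

lemma lieCentralizer_le_orthogonal_bracketSpan (hΦ : Φ.lieInvariant L) (U : Submodule R L) :
    U.lieCentralizer ≤ Φ.orthogonal U.bracketSpan := by
  intro z hz
  have : U.bracketSpan ≤ LinearMap.ker (Φ.flip z) := bracketSpan_le fun u hu v _ => by
    change Φ ⁅u, v⁆ z = 0
    rw [hΦ, ← lie_skew, hz u hu, neg_zero, map_zero, neg_zero]
  exact fun s hs => this hs

lemma lieCentralizer_inf_bracketSpan_eq_bot (hΦ : Φ.lieInvariant L)
    (hΦa : Φ.toQuadraticMap.Anisotropic) (U : Submodule R L) :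
    U.lieCentralizer ⊓ U.bracketSpan = ⊥ :=
  ((Φ.disjoint_orthogonal_of_anisotropic hΦa _).symm.mono_left
    (lieCentralizer_le_orthogonal_bracketSpan hΦ U)).eq_bot

/-- For `t ∈ c` orthogonal to `⁅c, c⁆` and `w ∈ c`, invariance makes `⁅w, t⁆ ∈ c` orthogonal to
all of `c`, in particular to itself. -/
lemma inf_orthogonal_bracketSpan_le_lieCentralizer (hΦ : Φ.lieInvariant L)
    (hΦa : Φ.toQuadraticMap.Anisotropic) (hc : ∀ u ∈ c, ∀ v ∈ c, ⁅u, v⁆ ∈ c) :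
    c ⊓ Φ.orthogonal c.bracketSpan ≤ c.lieCentralizer := by
  rintro t ⟨htc, htS⟩ w hw
  have hself : Φ ⁅w, t⁆ ⁅w, t⁆ = 0 := by
    have h : Φ ⁅w, ⁅w, t⁆⁆ t = 0 := htS _ (lie_mem_bracketSpan hw (hc w hw t htc))
    rwa [hΦ, neg_eq_zero] at h
  rw [← lie_skew, hΦa _ hself, neg_zero]

lemma inf_lieCentralizer_eq_inf_orthogonal_bracketSpan (hΦ : Φ.lieInvariant L)
    (hΦa : Φ.toQuadraticMap.Anisotropic) (hc : ∀ u ∈ c, ∀ v ∈ c, ⁅u, v⁆ ∈ c) :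
    c ⊓ c.lieCentralizer = c ⊓ Φ.orthogonal c.bracketSpan :=
  le_antisymm (inf_le_inf_left c (lieCentralizer_le_orthogonal_bracketSpan hΦ c))
    (le_inf inf_le_left (inf_orthogonal_bracketSpan_le_lieCentralizer hΦ hΦa hc))

lemma inf_lieCentralizer_eq_of_bracketSpan_le (hΦ : Φ.lieInvariant L)
    (hΦa : Φ.toQuadraticMap.Anisotropic) (hc : ∀ u ∈ c, ∀ v ∈ c, ⁅u, v⁆ ∈ c)
    (hUc : U ≤ c) (hcU : c.bracketSpan ≤ U.bracketSpan) :
    c ⊓ U.lieCentralizer = c ⊓ c.lieCentralizer := by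
  refine le_antisymm ?_ (inf_le_inf_left c (lieCentralizer_anti hUc))
  calc c ⊓ U.lieCentralizer
      ≤ c ⊓ Φ.orthogonal U.bracketSpan :=
        inf_le_inf_left c (lieCentralizer_le_orthogonal_bracketSpan hΦ U)
    _ ≤ c ⊓ Φ.orthogonal c.bracketSpan := inf_le_inf_left c (Φ.orthogonal_le hcU)
    _ = c ⊓ c.lieCentralizer := (inf_lieCentralizer_eq_inf_orthogonal_bracketSpan hΦ hΦa hc).symm

end CommRing

lemma inf_lieCentralizer_sup_bracketSpan {K L : Type*} [Field K] [LieRing L] [LieAlgebra K L]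
    [FiniteDimensional K L] {Φ : LinearMap.BilinForm K L} {c : Submodule K L}
    (hΦr : Φ.IsRefl) (hΦ : Φ.lieInvariant L) (hΦa : Φ.toQuadraticMap.Anisotropic)
    (hc : ∀ u ∈ c, ∀ v ∈ c, ⁅u, v⁆ ∈ c) :
    c ⊓ c.lieCentralizer ⊔ c.bracketSpan = c := by
  have hcompl : IsCompl c.bracketSpan (Φ.orthogonal c.bracketSpan) :=
    (Φ.isCompl_orthogonal_iff_disjoint hΦr).2 (Φ.disjoint_orthogonal_of_anisotropic hΦa _)
  calc c ⊓ c.lieCentralizer ⊔ c.bracketSpan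
      = c.bracketSpan ⊔ Φ.orthogonal c.bracketSpan ⊓ c := by
        rw [inf_lieCentralizer_eq_inf_orthogonal_bracketSpan hΦ hΦa hc, sup_comm, inf_comm]
    _ = (c.bracketSpan ⊔ Φ.orthogonal c.bracketSpan) ⊓ c :=
        (sup_inf_assoc_of_le _ (bracketSpan_le hc)).symm
    _ = c := by rw [hcompl.sup_eq_top, top_inf_eq]

end Submodule

open Submodule

lemma lie_mem_cent {g : Type*} [LieRing g] [LieAlgebra ℝ g] {x u v : g} (hu : u ∈ cent g x)
    (hv : v ∈ cent g x) : ⁅u, v⁆ ∈ cent g x := by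
  change ⁅x, ⁅u, v⁆⁆ = 0
  rw [leibniz_lie, show ⁅x, u⁆ = 0 from hu, show ⁅x, v⁆ = 0 from hv, zero_lie, lie_zero,
    add_zero]

lemma mem_lieCentralizer_of_le_cent {g : Type*} [LieRing g] [LieAlgebra ℝ g] {x : g}
    {U : Submodule ℝ g} (h : U ≤ cent g x) : x ∈ U.lieCentralizer :=
  fun _ hβ => h hβ

theorem stmt14_general {g : Type*} [LieRing g] [LieAlgebra ℝ g] [FiniteDimensional ℝ g]
    -- an ad-invariant inner product on g (g is of compact type)
    (B : g →ₗ[ℝ] g →ₗ[ℝ] ℝ)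
    (hsymm : ∀ x y : g, B x y = B y x)
    (hpos : ∀ x : g, x ≠ 0 → 0 < B x x)
    (hinv : ∀ x y z : g, B ⁅z, x⁆ y + B x ⁅z, y⁆ = 0)
    -- k = g^a and m = k^⊥
    (a : g) (k : Submodule ℝ g)
    (hkdef : k = cent g a)
    -- q(m), p(m) and R(m)
    (Rm : Set g)
    -- the known fact (2.5): for x ∈ R(m), ⁅g^x, g^x⁆ = ⁅k^x, k^x⁆ ⊆ k
    (h25 : ∀ x ∈ Rm,
      Submodule.span ℝ {w : g | ∃ u ∈ cent g x, ∃ v ∈ cent g x, w = ⁅u, v⁆}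
        = Submodule.span ℝ {w : g | ∃ u ∈ cent g x ⊓ k, ∃ v ∈ cent g x ⊓ k, w = ⁅u, v⁆}
      ∧ Submodule.span ℝ {w : g | ∃ u ∈ cent g x ⊓ k, ∃ v ∈ cent g x ⊓ k, w = ⁅u, v⁆} ≤ k)
    -- x0 ∈ R(m) and g0 = the centralizer of k^{x0} in g
    (x0 : g) (hx0 : x0 ∈ Rm)
    (g0 : Submodule ℝ g)
    (hg0 : ∀ z : g, z ∈ g0 ↔ ∀ β ∈ cent g x0 ⊓ k, ⁅z, β⁆ = 0) :
    a ∈ g0 ∧ x0 ∈ g0 ∧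
    -- g^{x0} = (g^{x0} ∩ g0) ⊕ ⁅k^{x0}, k^{x0}⁆
    ((cent g x0 ⊓ g0) ⊔
        Submodule.span ℝ {w : g | ∃ u ∈ cent g x0 ⊓ k, ∃ v ∈ cent g x0 ⊓ k, w = ⁅u, v⁆}
      = cent g x0) ∧
    ((cent g x0 ⊓ g0) ⊓
        Submodule.span ℝ {w : g | ∃ u ∈ cent g x0 ⊓ k, ∃ v ∈ cent g x0 ⊓ k, w = ⁅u, v⁆}
      = ⊥) ∧
    -- g^{x0} ∩ g0 is the center of g^{x0}
    (∀ z : g, z ∈ cent g x0 ⊓ g0 ↔ (z ∈ cent g x0 ∧ ∀ w ∈ cent g x0, ⁅z, w⁆ = 0)) := by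
  subst hkdef
  have hBinv : LinearMap.BilinForm.lieInvariant g B := fun x y z =>
    eq_neg_of_add_eq_zero_left (hinv y z x)
  have hBaniso : (LinearMap.BilinMap.toQuadraticMap B).Anisotropic :=
    QuadraticMap.PosDef.anisotropic hpos
  have hBrefl : B.IsRefl := fun x y h => (hsymm y x).trans h
  have hc : ∀ u ∈ cent g x0, ∀ v ∈ cent g x0, ⁅u, v⁆ ∈ cent g x0 := fun _ hu _ hv =>
    lie_mem_cent hu hv
  have hg0 : g0 = (cent g x0 ⊓ cent g a).lieCentralizer := Submodule.ext hg0
  have hS : (cent g x0).bracketSpan = (cent g x0 ⊓ cent g a).bracketSpan := (h25 x0 hx0).1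
  have hcenter : cent g x0 ⊓ g0 = cent g x0 ⊓ (cent g x0).lieCentralizer :=
    hg0 ▸ inf_lieCentralizer_eq_of_bracketSpan_le hBinv hBaniso hc inf_le_left hS.le
  refine ⟨hg0 ▸ mem_lieCentralizer_of_le_cent inf_le_right,
    hg0 ▸ mem_lieCentralizer_of_le_cent inf_le_left, ?_, ?_, fun z => by rw [hcenter]; rfl⟩
  · change _ ⊔ (cent g x0 ⊓ cent g a).bracketSpan = _
    rw [hcenter, ← hS]
    exact inf_lieCentralizer_sup_bracketSpan hBrefl hBinv hBaniso hc
  · rw [hg0, eq_bot_iff, ← lieCentralizer_inf_bracketSpan_eq_bot hBinv hBaniso]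
    exact inf_le_inf_right _ inf_le_right

theorem stmt14 {g : Type*} [LieRing g] [LieAlgebra ℝ g] [FiniteDimensional ℝ g]
    -- an ad-invariant inner product on g (g is of compact type)
    (B : g →ₗ[ℝ] g →ₗ[ℝ] ℝ)
    (hsymm : ∀ x y : g, B x y = B y x)
    (hpos : ∀ x : g, x ≠ 0 → 0 < B x x)
    (hinv : ∀ x y z : g, B ⁅z, x⁆ y + B x ⁅z, y⁆ = 0)
    -- k = g^a and m = k^⊥
    (a : g) (k m : Submodule ℝ g)
    (hkdef : k = cent g a)
    (hm : ∀ y : g, y ∈ m ↔ ∀ z ∈ k, B z y = 0)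
    -- q(m), p(m) and R(m)
    (qm pm : ℕ)
    (hqm : qm = sInf {d : ℕ | ∃ y ∈ m, d = finrank ℝ (cent g y)})
    (hpm : pm = sInf {d : ℕ | ∃ y ∈ m, d = finrank ℝ ↥(cent g y ⊓ k)})
    (Rm : Set g)
    (hRm : Rm = {x : g | x ∈ m ∧ finrank ℝ (cent g x) = qm ∧ finrank ℝ ↥(cent g x ⊓ k) = pm})
    -- the known fact (2.5): for x ∈ R(m), ⁅g^x, g^x⁆ = ⁅k^x, k^x⁆ ⊆ k
    (h25 : ∀ x ∈ Rm,
      Submodule.span ℝ {w : g | ∃ u ∈ cent g x, ∃ v ∈ cent g x, w = ⁅u, v⁆}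
        = Submodule.span ℝ {w : g | ∃ u ∈ cent g x ⊓ k, ∃ v ∈ cent g x ⊓ k, w = ⁅u, v⁆}
      ∧ Submodule.span ℝ {w : g | ∃ u ∈ cent g x ⊓ k, ∃ v ∈ cent g x ⊓ k, w = ⁅u, v⁆} ≤ k)
    -- x0 ∈ R(m) and g0 = the centralizer of k^{x0} in g
    (x0 : g) (hx0 : x0 ∈ Rm)
    (g0 : Submodule ℝ g)
    (hg0 : ∀ z : g, z ∈ g0 ↔ ∀ β ∈ cent g x0 ⊓ k, ⁅z, β⁆ = 0) :
    a ∈ g0 ∧ x0 ∈ g0 ∧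
    -- g^{x0} = (g^{x0} ∩ g0) ⊕ ⁅k^{x0}, k^{x0}⁆
    ((cent g x0 ⊓ g0) ⊔
        Submodule.span ℝ {w : g | ∃ u ∈ cent g x0 ⊓ k, ∃ v ∈ cent g x0 ⊓ k, w = ⁅u, v⁆}
      = cent g x0) ∧
    ((cent g x0 ⊓ g0) ⊓
        Submodule.span ℝ {w : g | ∃ u ∈ cent g x0 ⊓ k, ∃ v ∈ cent g x0 ⊓ k, w = ⁅u, v⁆}
      = ⊥) ∧
    -- g^{x0} ∩ g0 is the center of g^{x0}
    (∀ z : g, z ∈ cent g x0 ⊓ g0 ↔ (z ∈ cent g x0 ∧ ∀ w ∈ cent g x0, ⁅z, w⁆ = 0)) :=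
  stmt14_general B hsymm hpos hinv a k hkdef Rm h25 x0 hx0 g0 hg0
end

section
/- Suppose p ≥ 3, 1 ≤ n_1 ≤ n_2 ≤ … ≤ n_p, and N_1 := n_1 + … + n_{p−1} < n_p. Then for every x ∈ m the centralizer of x in k has real dimension at least 1 + (n_p − N_1)², i.e. dim_ℝ {Z ∈ k : Zx = xZ} ≥ 1 + (n_p − N_1)², and this lower bound is attained at some real skew-symmetric x0 ∈ m̃ = m ∩ so(n). -/
/-!
Write `S` for the indices outside the last block and `T` for those inside it. For `x ∈ m`, the
vectors supported on `T` and killed by `x` form a space `W` of dimension at least `|T| - |S|`;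
with `E` an isometry onto `W`, the map `(c, A) ↦ c • i·1 + E A Eᴴ` embeds `ℝ × u(dim W)` into the
centralizer. Conversely, for the explicit witness `x₀` below, a centralizing `Z` is one scalar on
`S` and on the partners of `S` in `T`, and is unconstrained only on the remaining `|T| - |S|`
indices of `T`.
-/

open Module Matrix

/-- The centralizer of `x` in `k = u(n_1) ⊕ … ⊕ u(n_p)` (block-diagonal
skew-Hermitian matrices), as a real subspace of the matrix space. -/
noncomputable def kxCent (n p : ℕ) (blk : Fin n → Fin p)
    (x : Matrix (Fin n) (Fin n) ℂ) : Submodule ℝ (Matrix (Fin n) (Fin n) ℂ) where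
  carrier := {Z | Zᴴ = -Z ∧ (∀ i j, blk i ≠ blk j → Z i j = 0) ∧ Z * x = x * Z}
  add_mem' := by
    intro Y Z hY hZ
    obtain ⟨hY1, hY2, hY3⟩ := hY
    obtain ⟨hZ1, hZ2, hZ3⟩ := hZ
    refine ⟨?_, ?_, ?_⟩
    · rw [conjTranspose_add, hY1, hZ1, neg_add]
    · intro i j hij
      simp [Matrix.add_apply, hY2 i j hij, hZ2 i j hij]
    · rw [Matrix.add_mul, Matrix.mul_add, hY3, hZ3]
  zero_mem' := by
    refine ⟨by simp, by simp, by simp⟩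
  smul_mem' := by
    intro c Z hZ
    obtain ⟨hZ1, hZ2, hZ3⟩ := hZ
    refine ⟨?_, ?_, ?_⟩
    · rw [conjTranspose_smul, hZ1, star_trivial, smul_neg]
    · intro i j hij
      simp [Matrix.smul_apply, hZ2 i j hij]
    · rw [Matrix.smul_mul, Matrix.mul_smul, hZ3]

theorem star_apply_of_mem_kxCent {n p : ℕ} {blk : Fin n → Fin p} {x Z : Matrix (Fin n) (Fin n) ℂ}
    (hZ : Z ∈ kxCent n p blk x) (i j : Fin n) : star (Z i j) = -Z j i :=
  congrFun (congrFun hZ.1 j) i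

theorem finrank_skewAdjoint_submodule_matrix (κ : Type*) [Fintype κ] [DecidableEq κ] :
    finrank ℝ (skewAdjoint.submodule ℝ (Matrix κ κ ℂ)) = Fintype.card κ ^ 2 := by
  have : Module.Finite ℝ (skewAdjoint (Matrix κ κ ℂ)) :=
    inferInstanceAs (Module.Finite ℝ (skewAdjoint.submodule ℝ (Matrix κ κ ℂ)))
  have : Module.Finite ℝ (selfAdjoint (Matrix κ κ ℂ)) :=
    inferInstanceAs (Module.Finite ℝ (selfAdjoint.submodule ℝ (Matrix κ κ ℂ)))
  have hsplit := (StarModule.decomposeProdAdjoint ℝ (Matrix κ κ ℂ)).finrank_eq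
  have hmulI : finrank ℝ (skewAdjoint (Matrix κ κ ℂ)) = finrank ℝ (selfAdjoint (Matrix κ κ ℂ)) := by
    refine (LinearEquiv.ofBijective skewAdjoint.negISMul
      ⟨fun a b h => Subtype.ext ?_, fun a => ?_⟩).finrank_eq
    · rw [← skewAdjoint.I_smul_neg_I a, ← skewAdjoint.I_smul_neg_I b, h]
    · exact ⟨⟨Complex.I • (a : Matrix κ κ ℂ), by simp⟩, Subtype.ext (by simp [smul_smul])⟩
  rw [Module.finrank_prod, Module.finrank_matrix, Complex.finrank_real_complex, ← hmulI] at hsplit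
  change finrank ℝ (skewAdjoint (Matrix κ κ ℂ)) = _
  rw [sq]; omega

section LowerBound

variable {n p : ℕ} (blk : Fin n → Fin p) (last : Fin p)

theorem I_smul_one_mem_kxCent (x : Matrix (Fin n) (Fin n) ℂ) :
    (Complex.I • 1 : Matrix (Fin n) (Fin n) ℂ) ∈ kxCent n p blk x := by
  refine ⟨by simp, fun i j hij => ?_, by simp⟩
  rw [Matrix.smul_apply, one_apply_ne (fun h => hij (congrArg blk h)), smul_zero]

theorem exists_isometry_mul_eq_zero {x : Matrix (Fin n) (Fin n) ℂ}
    (hxm : ∀ i j, blk i = blk j → x i j = 0) :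
    ∃ (d : ℕ) (E : Matrix (Fin n) (Fin d) ℂ),
      Fintype.card {i // blk i = last} - Fintype.card {i // blk i ≠ last} ≤ d ∧
      Eᴴ * E = 1 ∧ (∀ i k, blk i ≠ last → E i k = 0) ∧ x * E = 0 := by
  -- On vectors supported on the last block, the last-block rows of `x` vanish, so the kernel
  -- of `ψ` is cut out by `2 |S|` conditions and consists of vectors killed by `x`.
  let ψ : EuclideanSpace ℂ (Fin n) →ₗ[ℂ] ({i // blk i ≠ last} → ℂ) × ({i // blk i ≠ last} → ℂ) :=
    { toFun := fun v => (fun s => v s.1, fun s => (x *ᵥ v.ofLp) s.1)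
      map_add' := fun v w => by ext s <;> simp [Matrix.mulVec_add]
      map_smul' := fun c v => by ext s <;> simp [Matrix.mulVec_smul] }
  let b := stdOrthonormalBasis ℂ (LinearMap.ker ψ)
  have hsupp : ∀ k i, blk i ≠ last → (b k : EuclideanSpace ℂ (Fin n)) i = 0 :=
    fun k i hi => congrFun (congrArg Prod.fst (b k).2) ⟨i, hi⟩
  have hmulVec : ∀ k i, blk i ≠ last → (x *ᵥ (b k : EuclideanSpace ℂ (Fin n)).ofLp) i = 0 :=
    fun k i hi => congrFun (congrArg Prod.snd (b k).2) ⟨i, hi⟩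
  refine ⟨_, Matrix.of fun i k => (b k : EuclideanSpace ℂ (Fin n)) i, ?_, ?_, ?_, ?_⟩
  · have hrn := LinearMap.finrank_range_add_finrank_ker ψ
    have hrange := Submodule.finrank_le (LinearMap.range ψ)
    rw [Module.finrank_prod, Module.finrank_fintype_fun_eq_card] at hrange
    rw [finrank_euclideanSpace_fin] at hrn
    have hS : Fintype.card {i // blk i ≠ last} = n - Fintype.card {i // blk i = last} :=
      (Fintype.card_subtype_compl _).trans (by rw [Fintype.card_fin])
    have hT : Fintype.card {i // blk i = last} ≤ n :=
      (Fintype.card_subtype_le _).trans_eq (Fintype.card_fin n)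
    omega
  · ext k l
    have := orthonormal_iff_ite.mp b.orthonormal k l
    rw [Submodule.coe_inner, EuclideanSpace.inner_eq_star_dotProduct] at this
    simpa [Matrix.mul_apply, dotProduct, mul_comm, Matrix.one_apply] using this
  · exact fun i k hi => hsupp k i hi
  · ext i k
    rw [mul_apply, Matrix.zero_apply]
    by_cases hi : blk i = last
    · refine Finset.sum_eq_zero fun j _ => ?_
      by_cases hj : blk j = last
      · rw [hxm i j (hi.trans hj.symm), zero_mul]
      · rw [of_apply, hsupp k j hj, mul_zero]
    · exact hmulVec k i hi

variable {blk last} {κ : Type*} [Fintype κ]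

theorem mul_mul_conjTranspose_mem_kxCent {x : Matrix (Fin n) (Fin n) ℂ} (hx : xᴴ = -x)
    {E : Matrix (Fin n) κ ℂ} (hE : ∀ i k, blk i ≠ last → E i k = 0) (hxE : x * E = 0)
    {A : Matrix κ κ ℂ} (hA : Aᴴ = -A) : E * A * Eᴴ ∈ kxCent n p blk x := by
  have hEx : Eᴴ * x = 0 := by
    rw [← conjTranspose_conjTranspose x, ← conjTranspose_mul, hx, Matrix.neg_mul, hxE]
    simp
  refine ⟨?_, fun i j hij => ?_, ?_⟩
  · simp only [conjTranspose_mul, conjTranspose_conjTranspose, hA, Matrix.mul_neg,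
      Matrix.neg_mul, Matrix.mul_assoc]
  · rw [Matrix.mul_assoc, Matrix.mul_apply]
    by_cases hi : blk i = last
    · refine Finset.sum_eq_zero fun k _ => ?_
      rw [Matrix.mul_apply, Finset.sum_eq_zero fun l _ => ?_, mul_zero]
      rw [conjTranspose_apply, hE j l (fun hj => hij (hi.trans hj.symm)), star_zero, mul_zero]
    · exact Finset.sum_eq_zero fun k _ => by rw [hE i k hi, zero_mul]
  · rw [Matrix.mul_assoc, hEx, Matrix.mul_zero, ← Matrix.mul_assoc, ← Matrix.mul_assoc, hxE,
      Matrix.zero_mul, Matrix.zero_mul]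

theorem one_add_card_sq_le_finrank_kxCent [DecidableEq κ] {x : Matrix (Fin n) (Fin n) ℂ}
    (hx : xᴴ = -x) {E : Matrix (Fin n) κ ℂ} (hE : ∀ i k, blk i ≠ last → E i k = 0)
    (hxE : x * E = 0) (hEE : Eᴴ * E = 1) {s : Fin n} (hs : blk s ≠ last) :
    1 + Fintype.card κ ^ 2 ≤ finrank ℝ (kxCent n p blk x) := by
  let Ψ : ℝ × skewAdjoint.submodule ℝ (Matrix κ κ ℂ) →ₗ[ℝ] Matrix (Fin n) (Fin n) ℂ :=
    { toFun := fun cA => cA.1 • (Complex.I • 1) + E * (cA.2 : Matrix κ κ ℂ) * Eᴴ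
      map_add' := fun a b => by
        simp only [Prod.fst_add, Prod.snd_add, Submodule.coe_add, add_smul, Matrix.mul_add,
          Matrix.add_mul]
        abel
      map_smul' := fun c a => by
        simp [smul_add, smul_smul, Matrix.mul_smul, Matrix.smul_mul] }
  have hmem : ∀ cA, Ψ cA ∈ kxCent n p blk x := fun cA =>
    add_mem (Submodule.smul_mem _ _ (I_smul_one_mem_kxCent blk x))
      (mul_mul_conjTranspose_mem_kxCent hx hE hxE cA.2.2)
  have hinj : Function.Injective (Ψ.codRestrict _ hmem) := by
    rw [← LinearMap.ker_eq_bot, LinearMap.ker_eq_bot']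
    rintro ⟨c, A⟩ h
    have h : c • (Complex.I • 1) + E * (A : Matrix κ κ ℂ) * Eᴴ = 0 := congrArg Subtype.val h
    have hc : c = 0 := by
      have hss := congrFun (congrFun h s) s
      simpa [Matrix.mul_apply, hE s _ hs] using hss
    subst hc
    have hA : (A : Matrix κ κ ℂ) = 0 := by
      rw [zero_smul, zero_add] at h
      calc (A : Matrix κ κ ℂ) = Eᴴ * E * (A : Matrix κ κ ℂ) * (Eᴴ * E) := by
            rw [hEE, Matrix.one_mul, Matrix.mul_one]
        _ = Eᴴ * (E * (A : Matrix κ κ ℂ) * Eᴴ) * E := by simp only [Matrix.mul_assoc]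
        _ = 0 := by rw [h, Matrix.mul_zero, Matrix.zero_mul]
    exact Prod.ext rfl (Subtype.ext hA)
  have := LinearMap.finrank_le_finrank_of_injective hinj
  rwa [Module.finrank_prod, Module.finrank_self, finrank_skewAdjoint_submodule_matrix] at this

theorem finrank_kxCent_ge {x : Matrix (Fin n) (Fin n) ℂ} (hx : xᴴ = -x)
    (hxm : ∀ i j, blk i = blk j → x i j = 0) {s : Fin n} (hs : blk s ≠ last) :
    1 + (Fintype.card {i // blk i = last} - Fintype.card {i // blk i ≠ last}) ^ 2
      ≤ finrank ℝ (kxCent n p blk x) := by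
  obtain ⟨d, E, hd, hEE, hE, hxE⟩ := exists_isometry_mul_eq_zero blk last hxm
  calc _ ≤ 1 + Fintype.card (Fin d) ^ 2 := by rw [Fintype.card_fin]; gcongr
    _ ≤ _ := one_add_card_sq_le_finrank_kxCent hx hE hxE hEE hs

end LowerBound

namespace KxCent

section Witness

variable {n p : ℕ} {blk : Fin n → Fin p} {last : Fin p} {κ : Type*}
  (e : {i // blk i ≠ last} ⊕ κ ≃ {i // blk i = last})

def weight (i : Fin n) : ℝ := (i : ℕ) + 1

theorem weight_pos (i : Fin n) : 0 < weight i := by unfold weight; positivity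

theorem weight_injective : Function.Injective (weight (n := n)) := fun i j h => by
  simpa [weight, Fin.val_inj] using h

/- The witness pairs each index `i` outside the last block with `e (.inl i)` inside it, with the
weight `i + 1`; distinct weights force a centralizing `Z` to be diagonal there. It also joins
distinct non-last blocks by `±1`, which for `p ≥ 3` forces a single diagonal value. The indices
`e (.inr k)` are left free and carry the `u(n_p - N_1)` factor of the centralizer. -/
def witnessHalf : Matrix (Fin n) (Fin n) ℝ := of fun i j =>
  if h : blk i = last then 0
  else if j = (e (.inl ⟨i, h⟩)).1 then weight i
  else if blk i < blk j ∧ blk j ≠ last then 1 else 0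

def witness : Matrix (Fin n) (Fin n) ℂ := (witnessHalf e - (witnessHalf e)ᵀ).map (↑)

theorem witnessHalf_apply_of_blk_left_eq_last {i : Fin n} (hi : blk i = last) (j : Fin n) :
    witnessHalf e i j = 0 := by
  simp [witnessHalf, hi]

theorem witnessHalf_apply_of_blk_eq {i j : Fin n} (h : blk i = blk j) : witnessHalf e i j = 0 := by
  by_cases hi : blk i = last
  · exact witnessHalf_apply_of_blk_left_eq_last e hi j
  · have hj : j ≠ (e (.inl ⟨i, hi⟩)).1 := fun hj => hi (h.trans (hj ▸ (e _).2))
    simp [witnessHalf, hj, h]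

theorem witness_apply_of_blk_eq {i j : Fin n} (h : blk i = blk j) : witness e i j = 0 := by
  simp [witness, witnessHalf_apply_of_blk_eq e h, witnessHalf_apply_of_blk_eq e h.symm]

theorem witness_im (i j : Fin n) : (witness e i j).im = 0 := by
  simp [witness]

theorem witness_transpose : (witness e)ᵀ = -witness e := by
  ext i j
  simp [witness]

theorem witness_conjTranspose : (witness e)ᴴ = -witness e := by
  ext i j
  simp [witness]

theorem witnessHalf_apply_of_blk_right_eq_last {i t : Fin n} (hi : blk i ≠ last)
    (ht : blk t = last) :
    witnessHalf e i t = if t = (e (.inl ⟨i, hi⟩)).1 then weight i else 0 := by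
  simp [witnessHalf, hi, ht]

theorem witness_apply_of_blk_eq_last (i : Fin n) {t : Fin n} (ht : blk t = last) :
    witness e i t = witnessHalf e i t := by
  simp [witness, witnessHalf_apply_of_blk_left_eq_last e ht]

theorem witness_apply_inl (i : Fin n) (s : {i // blk i ≠ last}) :
    witness e i (e (.inl s)) = if i = s.1 then (weight i : ℂ) else 0 := by
  rw [witness_apply_of_blk_eq_last e i (e _).2]
  by_cases hi : blk i = last
  · have hne : i ≠ s.1 := fun h => s.2 (h ▸ hi)
    simp [witnessHalf_apply_of_blk_left_eq_last e hi, hne]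
  · have hiff : (e (.inl s)).1 = (e (.inl ⟨i, hi⟩)).1 ↔ i = s.1 := by
      rw [Subtype.val_inj, e.apply_eq_iff_eq, Sum.inl.injEq, Subtype.ext_iff, eq_comm]
    simp only [witnessHalf_apply_of_blk_right_eq_last e hi (e _).2, hiff]
    split_ifs <;> simp

theorem witness_apply_inr (i : Fin n) (k : κ) : witness e i (e (.inr k)) = 0 := by
  rw [witness_apply_of_blk_eq_last e i (e _).2]
  by_cases hi : blk i = last
  · simp [witnessHalf_apply_of_blk_left_eq_last e hi]
  · have hne : (e (.inr k)).1 ≠ (e (.inl ⟨i, hi⟩)).1 := fun h =>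
      Sum.inr_ne_inl (e.injective (Subtype.ext h))
    simp [witnessHalf_apply_of_blk_right_eq_last e hi (e _).2, hne]

theorem witness_apply_ne_zero {i j : Fin n} (hi : blk i ≠ last) (hj : blk j ≠ last)
    (hij : blk i ≠ blk j) : witness e i j ≠ 0 := by
  have hji : j ≠ (e (.inl ⟨i, hi⟩)).1 := fun h => hj (h ▸ (e _).2)
  have hij' : i ≠ (e (.inl ⟨j, hj⟩)).1 := fun h => hi (h ▸ (e _).2)
  rcases lt_or_gt_of_ne hij with h | h <;>
    simp [witness, witnessHalf, hi, hj, hji, hij', h, h.not_gt]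

end Witness

section WitnessCentralizer

variable {n p : ℕ} {blk : Fin n → Fin p} {last : Fin p} {κ : Type*}
  (e : {i // blk i ≠ last} ⊕ κ ≃ {i // blk i = last})

theorem mul_witness_apply_inl (Z : Matrix (Fin n) (Fin n) ℂ) (i : Fin n)
    (s : {i // blk i ≠ last}) : (Z * witness e) i (e (.inl s)) = Z i s * weight s.1 := by
  simp [mul_apply, witness_apply_inl, mul_ite]

theorem mul_witness_apply_inr (Z : Matrix (Fin n) (Fin n) ℂ) (i : Fin n) (k : κ) :
    (Z * witness e) i (e (.inr k)) = 0 := by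
  simp [mul_apply, witness_apply_inr]

variable {e} {Z : Matrix (Fin n) (Fin n) ℂ}

theorem witness_mul_apply_of_mem (hZ : Z ∈ kxCent n p blk (witness e))
    (s : {i // blk i ≠ last}) {t : Fin n} (ht : blk t = last) :
    (witness e * Z) s t = weight s.1 * Z (e (.inl s)) t := by
  rw [mul_apply, Finset.sum_eq_single (e (.inl s)).1]
  · rw [witness_apply_inl, if_pos rfl]
  · intro c _ hc
    by_cases hcl : blk c = last
    · rw [witness_apply_of_blk_eq_last e _ hcl, witnessHalf_apply_of_blk_right_eq_last e s.2 hcl,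
        if_neg hc, Complex.ofReal_zero, zero_mul]
    · rw [hZ.2.1 c t (ht ▸ hcl), mul_zero]
  · simp

theorem apply_mul_weight_eq (hZ : Z ∈ kxCent n p blk (witness e)) (s s' : {i // blk i ≠ last}) :
    Z s s' * weight s'.1 = weight s.1 * Z (e (.inl s)) (e (.inl s')) := by
  have h := congrFun (congrFun hZ.2.2 s) (e (.inl s'))
  rwa [mul_witness_apply_inl, witness_mul_apply_of_mem hZ s (e _).2] at h

theorem apply_inl_inr_eq_zero (hZ : Z ∈ kxCent n p blk (witness e)) (s : {i // blk i ≠ last})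
    (k : κ) : Z (e (.inl s)) (e (.inr k)) = 0 := by
  have h := congrFun (congrFun hZ.2.2 s) (e (.inr k))
  rw [mul_witness_apply_inr, witness_mul_apply_of_mem hZ s (e _).2] at h
  exact (mul_eq_zero.mp h.symm).resolve_left (Complex.ofReal_ne_zero.mpr (weight_pos _).ne')

theorem apply_eq_zero_of_ne (hZ : Z ∈ kxCent n p blk (witness e)) {s s' : {i // blk i ≠ last}}
    (h : s ≠ s') : Z s s' = 0 ∧ Z (e (.inl s)) (e (.inl s')) = 0 := by
  have h1 := apply_mul_weight_eq hZ s s'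
  have h2 := congrArg star (apply_mul_weight_eq hZ s' s)
  simp only [star_mul', star_apply_of_mem_kxCent hZ, Complex.star_def, Complex.conj_ofReal] at h2
  have hw : (weight s'.1 : ℂ) ^ 2 - (weight s.1 : ℂ) ^ 2 ≠ 0 := by
    rw [← Complex.ofReal_pow, ← Complex.ofReal_pow, ← Complex.ofReal_sub, Complex.ofReal_ne_zero,
      sub_ne_zero]
    intro hsq
    exact h (Subtype.ext (weight_injective
      ((pow_left_inj₀ (weight_pos _).le (weight_pos _).le two_ne_zero).mp hsq).symm))
  have hss' : Z s s' = 0 := by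
    refine (mul_eq_zero.mp ?_).resolve_right hw
    linear_combination (weight s'.1 : ℂ) * h1 + (weight s.1 : ℂ) * h2
  refine ⟨hss', ?_⟩
  rw [hss', zero_mul] at h1
  exact (mul_eq_zero.mp h1.symm).resolve_left (Complex.ofReal_ne_zero.mpr (weight_pos _).ne')

theorem apply_self_eq_apply_inl (hZ : Z ∈ kxCent n p blk (witness e)) (s : {i // blk i ≠ last}) :
    Z s s = Z (e (.inl s)) (e (.inl s)) := by
  have h := apply_mul_weight_eq hZ s s
  rw [mul_comm] at h
  exact mul_left_cancel₀ (Complex.ofReal_ne_zero.mpr (weight_pos _).ne') h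

theorem apply_eq_zero_of_ne_left (hZ : Z ∈ kxCent n p blk (witness e)) {s : {i // blk i ≠ last}}
    {j : Fin n} (h : j ≠ s.1) : Z s j = 0 ∧ Z j s = 0 := by
  by_cases hj : blk j = last
  · exact ⟨hZ.2.1 _ _ fun h' => s.2 (h'.trans hj), hZ.2.1 _ _ fun h' => s.2 (h'.symm.trans hj)⟩
  · have hne : s ≠ ⟨j, hj⟩ := fun h' => h (congrArg Subtype.val h').symm
    exact ⟨(apply_eq_zero_of_ne hZ hne).1, (apply_eq_zero_of_ne hZ hne.symm).1⟩

theorem apply_self_eq_of_blk_ne (hZ : Z ∈ kxCent n p blk (witness e))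
    {s s' : {i // blk i ≠ last}} (h : blk s ≠ blk s') : Z s s = Z s' s' := by
  have hc := congrFun (congrFun hZ.2.2 s) s'
  rw [mul_apply, mul_apply,
    Finset.sum_eq_single s.1 (fun c _ hc => by rw [(apply_eq_zero_of_ne_left hZ hc).1, zero_mul])
      (by simp),
    Finset.sum_eq_single s'.1 (fun c _ hc => by rw [(apply_eq_zero_of_ne_left hZ hc).2, mul_zero])
      (by simp), mul_comm] at hc
  exact mul_left_cancel₀ (witness_apply_ne_zero e s.2 s'.2 h) hc

theorem apply_self_eq (hp : 3 ≤ p) (hblk : Function.Surjective blk)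
    (hZ : Z ∈ kxCent n p blk (witness e)) (s s' : {i // blk i ≠ last}) : Z s s = Z s' s' := by
  by_cases h : blk s = blk s'
  · obtain ⟨j, hj, hjl⟩ := Fin.exists_ne_and_ne_of_two_lt (blk s) last (by omega)
    obtain ⟨v, rfl⟩ := hblk j
    exact (apply_self_eq_of_blk_ne hZ (s' := ⟨v, hjl⟩) (Ne.symm hj)).trans
      (apply_self_eq_of_blk_ne hZ (h ▸ hj))
  · exact apply_self_eq_of_blk_ne hZ h

theorem eq_zero_of_mem_kxCent_witness (hp : 3 ≤ p) (hblk : Function.Surjective blk)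
    (hZ : Z ∈ kxCent n p blk (witness e)) {s₀ : {i // blk i ≠ last}} (him : (Z s₀ s₀).im = 0)
    (hfree : Z.submatrix (fun k => (e (.inr k)).1) (fun k => (e (.inr k)).1) = 0) : Z = 0 := by
  have hdiag : ∀ s : {i // blk i ≠ last}, Z s s = 0 := by
    intro s
    have hre := congrArg Complex.re (star_apply_of_mem_kxCent hZ s₀ s₀)
    rw [Complex.star_def, Complex.conj_re, Complex.neg_re] at hre
    rw [apply_self_eq hp hblk hZ s s₀]
    exact Complex.ext (by simp only [Complex.zero_re]; linarith) him
  have hcases : ∀ i : Fin n, (∃ s : {i // blk i ≠ last}, i = s.1) ∨ ∃ a, i = (e a).1 := fun i =>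
    if h : blk i = last then .inr ⟨e.symm ⟨i, h⟩, by simp⟩ else .inl ⟨⟨i, h⟩, rfl⟩
  ext i j
  rw [Matrix.zero_apply]
  rcases hcases i with ⟨s, rfl⟩ | ⟨a, rfl⟩ <;> rcases hcases j with ⟨s', rfl⟩ | ⟨b, rfl⟩
  · by_cases h : s = s'
    · subst h
      exact hdiag s
    · exact (apply_eq_zero_of_ne hZ h).1
  · exact hZ.2.1 _ _ fun h => s.2 (h.trans (e b).2)
  · exact hZ.2.1 _ _ fun h => s'.2 (h.symm.trans (e a).2)
  · rcases a with s | k <;> rcases b with s' | k'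
    · by_cases h : s = s'
      · subst h
        rw [← apply_self_eq_apply_inl hZ, hdiag]
      · exact (apply_eq_zero_of_ne hZ h).2
    · exact apply_inl_inr_eq_zero hZ s k'
    · rw [← neg_eq_zero, ← star_apply_of_mem_kxCent hZ, apply_inl_inr_eq_zero hZ, star_zero]
    · exact congrFun (congrFun hfree k) k'

variable (e) in
theorem finrank_kxCent_witness_le [Fintype κ] [DecidableEq κ] (hp : 3 ≤ p)
    (hblk : Function.Surjective blk) (s₀ : {i // blk i ≠ last}) :
    finrank ℝ (kxCent n p blk (witness e)) ≤ 1 + Fintype.card κ ^ 2 := by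
  let τ : κ → Fin n := fun k => (e (.inr k)).1
  let Φ : kxCent n p blk (witness e) →ₗ[ℝ] ℝ × skewAdjoint.submodule ℝ (Matrix κ κ ℂ) :=
    { toFun := fun Z => ((Z.1 s₀ s₀).im, ⟨Z.1.submatrix τ τ, by
        change star _ = _
        rw [star_eq_conjTranspose, conjTranspose_submatrix, Z.2.1]
        rfl⟩)
      map_add' := fun Y Z => by ext <;> simp
      map_smul' := fun c Z => by ext <;> simp }
  have hinj : Function.Injective Φ := by
    rw [← LinearMap.ker_eq_bot, LinearMap.ker_eq_bot']
    intro Z hZ0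
    exact Subtype.ext (eq_zero_of_mem_kxCent_witness hp hblk Z.2 (congrArg Prod.fst hZ0)
      (congrArg (fun v => (v.2 : Matrix κ κ ℂ)) hZ0))
  have := LinearMap.finrank_le_finrank_of_injective hinj
  rwa [Module.finrank_prod, Module.finrank_self, finrank_skewAdjoint_submodule_matrix] at this

end WitnessCentralizer

end KxCent

open KxCent

theorem card_blk_ne_eq_sum {n p : ℕ} (blk : Fin n → Fin p) (hp : 0 < p) :
    Fintype.card {i // blk i ≠ ⟨p - 1, by omega⟩} =
      ∑ j ∈ Finset.univ.filter (fun j : Fin p => (j : ℕ) < p - 1),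
        (Finset.univ.filter (fun i => blk i = j)).card := by
  rw [Fintype.card_subtype, Finset.card_eq_sum_card_fiberwise (f := blk)
    (t := Finset.univ.filter (fun j : Fin p => (j : ℕ) < p - 1))]
  · refine Finset.sum_congr rfl fun j hj => congrArg Finset.card ?_
    ext i
    simp only [Finset.mem_filter, Finset.mem_univ, true_and] at hj ⊢
    constructor
    · exact And.right
    · rintro rfl
      exact ⟨fun h => by simp [h] at hj, rfl⟩
  · intro i hi
    simp only [Finset.coe_filter, Finset.mem_univ, true_and, Set.mem_ofPred_eq] at hi ⊢
    have hlt := (blk i).isLt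
    have hne : (blk i : ℕ) ≠ p - 1 := fun h => hi (Fin.ext h)
    omega

theorem stmt18 (n p : ℕ) (hp : 3 ≤ p) (blk : Fin n → Fin p)
    -- the block sizes n_j
    (N : Fin p → ℕ)
    (hN : ∀ j : Fin p, N j = (Finset.univ.filter (fun i => blk i = j)).card)
    (hpos : ∀ j : Fin p, 1 ≤ N j)
    -- N_1 = n_1 + … + n_{p-1} < n_p
    (N1 : ℕ)
    (hN1 : N1 = ∑ j ∈ Finset.univ.filter (fun j : Fin p => (j : ℕ) < p - 1), N j)
    (hlt : N1 < N ⟨p - 1, by omega⟩) :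
    -- every x ∈ m has centralizer in k of dimension at least 1 + (n_p − N_1)²
    (∀ x : Matrix (Fin n) (Fin n) ℂ, xᴴ = -x → (∀ i j, blk i = blk j → x i j = 0) →
      1 + (N ⟨p - 1, by omega⟩ - N1) ^ 2 ≤ finrank ℝ (kxCent n p blk x)) ∧
    -- and the bound is attained at some real skew-symmetric x0 ∈ m̃
    (∃ x0 : Matrix (Fin n) (Fin n) ℂ,
      (∀ i j, (x0 i j).im = 0) ∧ x0ᵀ = -x0 ∧ (∀ i j, blk i = blk j → x0 i j = 0) ∧
      finrank ℝ (kxCent n p blk x0) = 1 + (N ⟨p - 1, by omega⟩ - N1) ^ 2) := by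
  set last : Fin p := ⟨p - 1, by omega⟩
  have hT : Fintype.card {i // blk i = last} = N last := by rw [Fintype.card_subtype, hN]
  have hS : Fintype.card {i // blk i ≠ last} = N1 := by
    rw [card_blk_ne_eq_sum blk (by omega), hN1]
    exact Finset.sum_congr rfl fun j _ => (hN j).symm
  have hblk : Function.Surjective blk := fun j => by
    obtain ⟨i, hi⟩ := Finset.card_pos.mp (hN j ▸ hpos j)
    exact ⟨i, (Finset.mem_filter.mp hi).2⟩
  obtain ⟨s₀, hs₀⟩ : ∃ s, blk s ≠ last := by
    obtain ⟨s, hs⟩ := hblk ⟨0, by omega⟩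
    exact ⟨s, by rw [hs, Ne, Fin.ext_iff]; simp only [last]; omega⟩
  have e : {i // blk i ≠ last} ⊕ Fin (N last - N1) ≃ {i // blk i = last} :=
    Fintype.equivOfCardEq (by rw [Fintype.card_sum, Fintype.card_fin, hS, hT]; omega)
  have hlower := fun {x} hx hxm => hT ▸ hS ▸ finrank_kxCent_ge (x := x) hx hxm hs₀
  refine ⟨fun x hx hxm => hlower hx hxm, witness e, witness_im e, witness_transpose e,
    fun i j => witness_apply_of_blk_eq e,
    le_antisymm ?_ (hlower (witness_conjTranspose e) fun i j => witness_apply_of_blk_eq e)⟩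
  simpa using finrank_kxCent_witness_le e hp hblk ⟨s₀, hs₀⟩
end
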